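/- arXiv:1611.08899 — 6 statements merged into one kernel-verified Lean document; each statement's English description precedes it below -/
import Mathlib

section
/- Let 0 < α₀ and α₀ ≤ α < 1/2, and set A = cos(πα), a = cos(απ/2). Then for every real ω ≥ 1/α₀ and every r ≥ 0, |K_α(r, e^{-iαπ/2} ω)| ≤ e^{-r^{1/α}} / (π A (1 - a² A)). -/
open MeasureTheory Filter

lemma aux_im_bound (r ω φ : ℝ) (hω : 0 ≤ ω) :
    ω * |Real.sin φ| ≤ ‖(r : ℂ) - (ω : ℂ) * Complex.exp ((φ : ℂ) * Complex.I)‖ := by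
  have him : ((r : ℂ) - (ω : ℂ) * Complex.exp ((φ : ℂ) * Complex.I)).im
      = -(ω * Real.sin φ) := by
    simp [Complex.exp_ofReal_mul_I_im]
  calc ω * |Real.sin φ| = |(-(ω * Real.sin φ))| := by
        rw [abs_neg, abs_mul, abs_of_nonneg hω]
    _ ≤ _ := by rw [← him]; exact Complex.abs_im_le_norm _

lemma aux_key_ineq (a s : ℝ) (hs : 0 < s) (ha1 : a < 1) (h2 : 1 / 2 < a ^ 2)
    (hsa : s ^ 2 = 1 - a ^ 2) :
    2 * a * s * (2 * a ^ 2 - 1) * (1 + 2 * a ^ 2) ≤ 4 * a ^ 2 - 1 := by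
  nlinarith [sq_nonneg (2*a*s*(2*a^2-1)*(1+2*a^2) - (4*a^2-1)), sq_nonneg a,
    sq_nonneg (a*s), sq_nonneg (a^2 - 1/2), sq_nonneg (s - a), mul_pos hs hs]


/-- The kernel `K_α(r,z)` from the integral representation of the
Mittag-Leffler function:
`K_α(r, z) = - e^{-r^{1/α}} z sin(πα) / (πα (r² - 2 r z cos(πα) + z²))`. -/
noncomputable def mlIntegralKernel (α : ℝ) (r : ℝ) (z : ℂ) : ℂ :=
  -((Real.exp (-(r ^ (1 / α))) : ℂ) * z * (Real.sin (Real.pi * α) : ℂ)) /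
    ((Real.pi * α : ℝ) * ((r : ℂ) ^ 2 - 2 * (r : ℂ) * z * (Real.cos (Real.pi * α) : ℂ) + z ^ 2))

/-- For `0 < α₀ ≤ α < 1/2`, `ω ≥ 1/α₀` and `r ≥ 0`, with `A = cos(πα)` and
`a = cos(απ/2)`, we have `|K_α(r, e^{-iαπ/2} ω)| ≤ e^{-r^{1/α}} / (π A (1 - a² A))`. -/
theorem mlIntegralKernel_bound_of_lt_half (α₀ α : ℝ) (hα₀ : 0 < α₀)
    (hα₀α : α₀ ≤ α) (hα : α < 1 / 2) (ω : ℝ) (hω : 1 / α₀ ≤ ω) (r : ℝ) (hr : 0 ≤ r) :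
    ‖mlIntegralKernel α r (Complex.exp (-(Complex.I * α * Real.pi / 2)) * (ω : ℂ))‖ ≤
      Real.exp (-(r ^ (1 / α))) /
        (Real.pi * Real.cos (Real.pi * α) *
          (1 - Real.cos (α * Real.pi / 2) ^ 2 * Real.cos (Real.pi * α))) := by
  have hπ := Real.pi_pos
  have hαpos : 0 < α := hα₀.trans_le hα₀α
  have hωpos : 0 < ω := lt_of_lt_of_le (by positivity) hω
  have hαω : 1 ≤ α * ω := by
    have h1 : 1 / α ≤ 1 / α₀ := by gcongr
    have h2 : 1 / α ≤ ω := h1.trans hω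
    rw [div_le_iff₀ hαpos] at h2
    linarith [mul_comm α ω]
  set z : ℂ := Complex.exp (-(Complex.I * α * Real.pi / 2)) * (ω : ℂ) with hzdef
  set θ : ℝ := α * Real.pi / 2 with hθdef
  have hθpos : 0 < θ := by positivity
  have hθlt : θ < Real.pi / 4 := by rw [hθdef]; nlinarith
  set a : ℝ := Real.cos θ with hadef
  set s : ℝ := Real.sin θ with hsdef
  have hs : 0 < s := Real.sin_pos_of_pos_of_lt_pi hθpos (by nlinarith)
  have hacos : Real.cos (Real.pi / 4) < a :=
    Real.cos_lt_cos_of_nonneg_of_le_pi hθpos.le (by nlinarith) hθlt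
  have hsq2 : Real.cos (Real.pi / 4) = Real.sqrt 2 / 2 := Real.cos_pi_div_four
  have ha2 : 1 / 2 < a ^ 2 := by
    rw [hsq2] at hacos
    nlinarith [Real.sq_sqrt (by norm_num : (2:ℝ) ≥ 0), Real.sqrt_nonneg 2]
  have hapos : 0 < a := by
    rw [hsq2] at hacos
    nlinarith [Real.sqrt_nonneg 2]
  have hs2 : s ^ 2 = 1 - a ^ 2 := by
    have := Real.sin_sq_add_cos_sq θ; linarith
  have ha1 : a < 1 := by nlinarith
  have hB : (0:ℝ) < 1 - a ^ 2 * (2 * a ^ 2 - 1) := by nlinarith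
  have hBs : 1 - a ^ 2 * (2 * a ^ 2 - 1) = s ^ 2 * (1 + 2 * a ^ 2) := by
    rw [hs2]; ring
  have hA : (0:ℝ) < 2 * a ^ 2 - 1 := by nlinarith
  have key : 2 * a * s * (2 * a ^ 2 - 1) * (1 + 2 * a ^ 2) ≤ 4 * a ^ 2 - 1 :=
    aux_key_ineq a s hs ha1 ha2 hs2
  -- trig identities
  have hπα : Real.pi * α = 2 * θ := by rw [hθdef]; ring
  have hcos2 : Real.cos (Real.pi * α) = 2 * a ^ 2 - 1 := by
    rw [hπα, Real.cos_two_mul]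
  have hsin2 : Real.sin (Real.pi * α) = 2 * s * a := by
    rw [hπα, Real.sin_two_mul]
  have hsin3 : Real.sin (3 * θ) = s * (4 * a ^ 2 - 1) := by
    rw [Real.sin_three_mul]; linear_combination (-4 * s) * hs2
  have h3θ : 0 < Real.sin (3 * θ) :=
    Real.sin_pos_of_pos_of_lt_pi (by positivity) (by linarith)
  have h4a : (0:ℝ) < 4 * a ^ 2 - 1 := by linarith
  -- complex exponentials
  set E1 : ℂ := Complex.exp ((θ : ℂ) * Complex.I) with hE1def
  set E3 : ℂ := Complex.exp (((-(3 * θ) : ℝ) : ℂ) * Complex.I) with hE3def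
  set E2 : ℂ := Complex.exp (((-θ : ℝ) : ℂ) * Complex.I) with hE2def
  have hz : z = (ω : ℂ) * E2 := by
    rw [hzdef, hE2def]
    have harg : -(Complex.I * α * Real.pi / 2) = ((-θ : ℝ) : ℂ) * Complex.I := by
      rw [hθdef]; push_cast; ring
    rw [harg]; ring
  have hE12 : E1 * E2 = 1 := by
    rw [hE1def, hE2def, ← Complex.exp_add, ← Complex.exp_zero]
    congr 1; push_cast; ring
  have hE23 : E2 ^ 3 = E3 := by
    rw [hE2def, hE3def]
    have harg : (((-(3 * θ) : ℝ)) : ℂ) * Complex.I = (3 : ℕ) * (((-θ : ℝ) : ℂ) * Complex.I) := by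
      push_cast; ring
    rw [harg, Complex.exp_nat_mul]
  have hcosC : ((Real.cos (Real.pi * α) : ℝ) : ℂ) = (E1 ^ 2 + E2 ^ 2) / 2 := by
    rw [Complex.ofReal_cos]
    have h2c := Complex.two_cos ((Real.pi * α : ℝ) : ℂ)
    have he1 : Complex.exp (((Real.pi * α : ℝ) : ℂ) * Complex.I) = E1 ^ 2 := by
      rw [hE1def, ← Complex.exp_nat_mul]
      congr 1; push_cast [hπα]; ring
    have he2 : Complex.exp (-((Real.pi * α : ℝ) : ℂ) * Complex.I) = E2 ^ 2 := by
      rw [hE2def, ← Complex.exp_nat_mul]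
      congr 1; push_cast [hπα]; ring
    rw [he1, he2] at h2c
    linear_combination h2c / 2
  -- factorization of the denominator
  have hfac : (r : ℂ) ^ 2 - 2 * (r : ℂ) * z * ((Real.cos (Real.pi * α) : ℝ) : ℂ) + z ^ 2
      = ((r : ℂ) - (ω : ℂ) * E1) * ((r : ℂ) - (ω : ℂ) * E3) := by
    rw [hz, hcosC, ← hE23]
    linear_combination (-(( r : ℂ) * (ω : ℂ) * E1) - (ω : ℂ) ^ 2 * E2 ^ 2) * hE12
  -- norm lower bounds
  have hnorm1 : ω * s ≤ ‖(r : ℂ) - (ω : ℂ) * E1‖ := by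
    have h := aux_im_bound r ω θ hωpos.le
    rwa [abs_of_nonneg hs.le] at h
  have hnorm2 : ω * (s * (4 * a ^ 2 - 1)) ≤ ‖(r : ℂ) - (ω : ℂ) * E3‖ := by
    have h := aux_im_bound r ω (-(3 * θ)) hωpos.le
    rwa [Real.sin_neg, abs_neg, abs_of_pos h3θ, hsin3] at h
  set N1 : ℝ := ‖(r : ℂ) - (ω : ℂ) * E1‖ with hN1def
  set N2 : ℝ := ‖(r : ℂ) - (ω : ℂ) * E3‖ with hN2def
  have hN1 : 0 < N1 := lt_of_lt_of_le (by positivity) hnorm1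
  have hN2 : 0 < N2 := lt_of_lt_of_le (by positivity) hnorm2
  have hE := Real.exp_pos (-(r ^ (1 / α)))
  -- norm of the kernel
  have hK : ‖mlIntegralKernel α r z‖
      = (Real.exp (-(r ^ (1 / α))) * ω * (2 * s * a)) / (Real.pi * α * (N1 * N2)) := by
    have hE2norm : ‖E2‖ = 1 := by rw [hE2def]; exact Complex.norm_exp_ofReal_mul_I _
    rw [mlIntegralKernel, norm_div, hfac, hz]
    simp only [norm_neg, norm_mul, Complex.norm_real, Real.norm_eq_abs]
    rw [abs_of_pos hE, abs_of_pos hωpos, hsin2,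
      abs_of_pos (by positivity : (0:ℝ) < 2 * s * a),
      abs_of_pos hπ, abs_of_pos hαpos, hE2norm]
    ring
  rw [hK, hcos2]
  clear hK hzdef hz hE12 hE23 hcosC hfac hN1def hN2def hE1def hE2def hE3def
  clear_value N1 N2
  clear E1 E2 E3 z
  clear hsin2 hsin3 h3θ hcos2 hπα hacos hsq2
  clear_value s a θ
  rw [div_le_div_iff₀ (by positivity) (by positivity)]
  have hN : ω * s * (ω * (s * (4 * a ^ 2 - 1))) ≤ N1 * N2 :=
    mul_le_mul hnorm1 hnorm2 (by positivity) hN1.le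
  have h5 : ω * s ^ 2 * (4 * a ^ 2 - 1) ≤ α * (N1 * N2) := by
    calc ω * s ^ 2 * (4 * a ^ 2 - 1)
        ≤ (α * ω) * (ω * s ^ 2 * (4 * a ^ 2 - 1)) :=
          le_mul_of_one_le_left (by positivity) hαω
      _ = α * (ω * s * (ω * (s * (4 * a ^ 2 - 1)))) := by ring
      _ ≤ α * (N1 * N2) := mul_le_mul_of_nonneg_left hN hαpos.le
  calc Real.exp (-(r ^ (1 / α))) * ω * (2 * s * a)
        * (Real.pi * (2 * a ^ 2 - 1) * (1 - a ^ 2 * (2 * a ^ 2 - 1)))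
      = (Real.exp (-(r ^ (1 / α))) * Real.pi * ω * s ^ 2)
          * (2 * a * s * (2 * a ^ 2 - 1) * (1 + 2 * a ^ 2)) := by rw [hBs]; ring
    _ ≤ (Real.exp (-(r ^ (1 / α))) * Real.pi * ω * s ^ 2) * (4 * a ^ 2 - 1) :=
        mul_le_mul_of_nonneg_left key (by positivity)
    _ = (Real.exp (-(r ^ (1 / α))) * Real.pi) * (ω * s ^ 2 * (4 * a ^ 2 - 1)) := by ring
    _ ≤ (Real.exp (-(r ^ (1 / α))) * Real.pi) * (α * (N1 * N2)) :=
        mul_le_mul_of_nonneg_left h5 (by positivity)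
    _ = Real.exp (-(r ^ (1 / α))) * (Real.pi * α * (N1 * N2)) := by ring
end

section
/- Let 1/2 ≤ α < 1. Then for every real ω ≥ 2 and every r ≥ 0, |K_α(r, e^{-iαπ/2} ω)| ≤ e^{-r^{1/α}} / π. -/
open MeasureTheory Filter

/-- For `1/2 ≤ α < 1`, `ω ≥ 2` and `r ≥ 0`, we have
`|K_α(r, e^{-iαπ/2} ω)| ≤ e^{-r^{1/α}} / π`. -/
theorem mlIntegralKernel_bound_of_half_le (α : ℝ) (hα1 : 1 / 2 ≤ α) (hα2 : α < 1)
    (ω : ℝ) (hω : 2 ≤ ω) (r : ℝ) (hr : 0 ≤ r) :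
    ‖mlIntegralKernel α r (Complex.exp (-(Complex.I * α * Real.pi / 2)) * (ω : ℂ))‖ ≤
      Real.exp (-(r ^ (1 / α))) / Real.pi := by
  have hα0 : (0:ℝ) < α := by linarith
  have hπ := Real.pi_pos
  set φ := Real.pi * α with hφ
  have hφ1 : Real.pi / 2 ≤ φ := by rw [hφ]; nlinarith
  have hφ2 : φ < Real.pi := by rw [hφ]; nlinarith
  have hsin : 0 < Real.sin φ := Real.sin_pos_of_pos_of_lt_pi (by nlinarith) hφ2
  have hcos : Real.cos φ ≤ 0 := Real.cos_nonpos_of_pi_div_two_le_of_le hφ1 (by nlinarith)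
  have hsin2 : 0 ≤ Real.sin (φ / 2) :=
    Real.sin_nonneg_of_nonneg_of_le_pi (by nlinarith) (by nlinarith)
  have hs2 : Real.sin φ = 2 * Real.sin (φ/2) * Real.cos (φ/2) := by
    have := Real.sin_two_mul (φ/2)
    rw [show 2*(φ/2) = φ from by ring] at this
    linarith
  set z := Complex.exp (-(Complex.I * α * Real.pi / 2)) * (ω : ℂ) with hz
  have harg : -(Complex.I * (α:ℂ) * (Real.pi:ℂ) / 2) = ((-(φ/2) : ℝ) : ℂ) * Complex.I := by
    rw [hφ]; push_cast; ring
  have hz' : z = Complex.ofReal (ω * Real.cos (φ/2)) - Complex.ofReal (ω * Real.sin (φ/2)) * Complex.I := by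
    rw [hz, harg, Complex.exp_mul_I, ← Complex.ofReal_cos, ← Complex.ofReal_sin,
      Real.cos_neg, Real.sin_neg]
    push_cast
    ring
  set D := (r : ℂ)^2 - 2*(r:ℂ)*z*(Real.cos φ : ℂ) + z^2 with hD
  have hDim : D.im = 2*r*(ω*Real.sin (φ/2))*Real.cos φ - ω^2 * Real.sin φ := by
    rw [hD, hz', hs2]
    simp only [Complex.sub_im, Complex.add_im, Complex.mul_im, Complex.mul_re,
      Complex.ofReal_re, Complex.ofReal_im, Complex.I_re, Complex.I_im, pow_two,
      Complex.sub_re, Complex.add_re, Complex.re_ofNat, Complex.im_ofNat]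
    ring
  have hωpos : (0:ℝ) < ω := by linarith
  have hDge : ω^2 * Real.sin φ ≤ ‖D‖ := by
    have h1 : ω^2 * Real.sin φ ≤ |D.im| := by
      rw [hDim]
      have h2 : 2*r*(ω*Real.sin (φ/2))*Real.cos φ ≤ 0 := by
        apply mul_nonpos_of_nonneg_of_nonpos _ hcos
        positivity
      rw [abs_sub_comm]
      calc ω^2 * Real.sin φ ≤ ω^2 * Real.sin φ - 2*r*(ω*Real.sin (φ/2))*Real.cos φ := by linarith
        _ ≤ |ω^2 * Real.sin φ - 2*r*(ω*Real.sin (φ/2))*Real.cos φ| := le_abs_self _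
    exact h1.trans (Complex.abs_im_le_norm D)
  have hDpos : (0:ℝ) < ‖D‖ := lt_of_lt_of_le (by positivity) hDge
  have hre : (-(Complex.I * (α:ℂ) * (Real.pi:ℂ) / 2)).re = 0 := by
    rw [harg]; simp
  have hknorm : ‖mlIntegralKernel α r z‖ =
      Real.exp (-(r ^ (1/α))) * ω * Real.sin φ / (Real.pi * α * ‖D‖) := by
    rw [mlIntegralKernel, ← hφ, ← hD, hz]
    simp only [norm_div, norm_neg, norm_mul, Complex.norm_real,
      Complex.norm_exp, hre, Real.exp_zero, Real.norm_eq_abs]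
    rw [abs_of_nonneg (Real.exp_nonneg _), abs_of_nonneg hsin.le, abs_of_nonneg hωpos.le,
      abs_of_nonneg (by positivity : (0:ℝ) ≤ φ)]
    ring
  have hE : (0:ℝ) < Real.exp (-(r ^ (1/α))) := Real.exp_pos _
  rw [hknorm, div_le_div_iff₀ (by positivity) hπ]
  have hαω : 1 ≤ α * ω := by nlinarith
  have hint1 := mul_le_mul_of_nonneg_left hαω
    (le_of_lt (mul_pos (mul_pos (mul_pos hE hsin) hπ) hωpos))
  have hint2 := mul_le_mul_of_nonneg_left hDge
    (by positivity : (0:ℝ) ≤ Real.exp (-(r ^ (1/α))) * Real.pi * α)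
  nlinarith [hint1, hint2]
end

section
/- Let 0 < α₀ ≤ 1 and let α ∈ [α₀, 1]. Then for every integer k ≥ 1, (1/α₀)^k / Γ(αk + 1) ≤ (e²/√(2π)) · (e / (α₀^{α₀+1} k^{α₀}))^k, where Γ is the Gamma function. -/
open Real Set

lemma pow_le_exp_mul_factorial (n : ℕ) : (n:ℝ) ^ n ≤ Real.exp n * n.factorial := by
  induction n with
  | zero => simp
  | succ n ih =>
    rcases Nat.eq_zero_or_pos n with h | h
    · subst h
      norm_num
    have hn : (0:ℝ) < n := by exact_mod_cast h
    have h1 : ((n:ℝ)+1) ^ n ≤ Real.exp 1 * (n:ℝ) ^ n := by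
      have : ((n:ℝ)+1) = n * (1 + 1/n) := by field_simp
      rw [this, mul_pow]
      have h2 : (1 + 1/(n:ℝ)) ^ n ≤ Real.exp 1 := by
        calc (1 + 1/(n:ℝ)) ^ n ≤ (Real.exp (1/n)) ^ n := by
              apply pow_le_pow_left₀ (by positivity)
              linarith [Real.add_one_le_exp (1/(n:ℝ))]
          _ = Real.exp 1 := by
              rw [← Real.exp_nat_mul]; congr 1; field_simp
      nlinarith [pow_pos hn n]
    have hcast : ((n+1:ℕ):ℝ) = (n:ℝ)+1 := by push_cast; ring
    rw [hcast]
    calc ((n:ℝ)+1) ^ (n+1) = ((n:ℝ)+1)^n * ((n:ℝ)+1) := by ring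
      _ ≤ (Real.exp 1 * (n:ℝ)^n) * ((n:ℝ)+1) := by nlinarith
      _ ≤ (Real.exp 1 * (Real.exp n * n.factorial)) * ((n:ℝ)+1) := by
          have : (0:ℝ) < (n:ℝ)+1 := by linarith
          have := Real.exp_pos (1:ℝ)
          have h3 : Real.exp 1 * (n:ℝ)^n ≤ Real.exp 1 * (Real.exp n * n.factorial) := by
            exact mul_le_mul_of_nonneg_left ih (Real.exp_pos 1).le
          exact mul_le_mul_of_nonneg_right h3 (by linarith)
      _ = Real.exp ((n:ℝ)+1) * ((n+1) * n.factorial) := by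
          rw [Real.exp_add]; ring
      _ = Real.exp ((n:ℝ)+1) * (n+1).factorial := by
          rw [Nat.factorial_succ]; push_cast; ring

lemma gamma_half {y : ℝ} (h1 : 1 ≤ y) (h2 : y ≤ 2) : (1/2 : ℝ) ≤ Real.Gamma y := by
  have hy0 : (0:ℝ) < y := by linarith
  have hG : 0 < Real.Gamma y := Real.Gamma_pos_of_pos hy0
  rcases eq_or_lt_of_le h2 with h | h
  · rw [h, Real.Gamma_two]; norm_num
  · have h3y : (0:ℝ) < 3 - y := by linarith
    have key := Real.convexOn_log_Gamma.2 (mem_Ioi.mpr hy0)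
      (mem_Ioi.mpr (by norm_num : (0:ℝ) < 3))
      (by positivity : (0:ℝ) ≤ 1/(3-y)) (show (0:ℝ) ≤ (2-y)/(3-y) from div_nonneg (by linarith) h3y.le)
      (by field_simp; ring)
    have hpt : (1/(3-y)) • y + ((2-y)/(3-y)) • (3:ℝ) = 2 := by
      rw [smul_eq_mul, smul_eq_mul, div_mul_eq_mul_div, div_mul_eq_mul_div, ← add_div, div_eq_iff h3y.ne']; ring
    rw [hpt] at key
    simp only [Function.comp_apply, smul_eq_mul] at key
    have hG3 : Real.Gamma 3 = 2 := by
      have h23 : (3:ℝ) = (2:ℕ) + 1 := by norm_num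
      rw [h23, Real.Gamma_nat_eq_factorial]; norm_num
    rw [Real.Gamma_two, hG3, Real.log_one] at key
    -- key : 0 ≤ 1/(3-y) * log (Gamma y) + (2-y)/(3-y) * log 2
    have hlog : -Real.log 2 ≤ Real.log (Real.Gamma y) := by
      have h2y : 2 - y ≤ 1 := by linarith
      have hl2 : 0 ≤ Real.log 2 := Real.log_nonneg (by norm_num)
      have : 0 ≤ Real.log (Real.Gamma y) + (2-y) * Real.log 2 := by
        have := mul_le_mul_of_nonneg_left key h3y.le
        rw [mul_zero] at this
        calc (0:ℝ) ≤ (3-y) * (1/(3-y) * Real.log (Real.Gamma y) + (2-y)/(3-y) * Real.log 2) := this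
          _ = Real.log (Real.Gamma y) + (2-y) * Real.log 2 := by field_simp
      nlinarith
    have := Real.exp_le_exp.mpr hlog
    rw [Real.exp_log hG, Real.exp_neg, Real.exp_log (by norm_num : (0:ℝ) < 2)] at this
    linarith


lemma gamma_interp_bound {b : ℝ} {n : ℕ} (hn1 : 1 ≤ n) (hnb : (n:ℝ) ≤ b)
    (hbn : b < (n:ℝ) + 1) :
    (n : ℝ) ^ b * Real.exp (-(n:ℝ)) ≤ Real.Gamma (b + 1) := by
  have hn0 : (0:ℝ) < n := by exact_mod_cast hn1
  have hb : (1:ℝ) ≤ b := le_trans (by exact_mod_cast hn1) hnb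
  set t := b - (n:ℝ) with ht
  have ht0 : 0 ≤ t := by simp [ht]; linarith
  have ht1 : t < 1 := by simp [ht]; linarith
  have htp : (0:ℝ) < t + 1 := by linarith
  -- convexity
  have key := Real.convexOn_log_Gamma.2 (mem_Ioi.mpr hn0)
    (show b + 1 ∈ Ioi (0:ℝ) from mem_Ioi.mpr (by linarith))
    (show (0:ℝ) ≤ t/(t+1) from div_nonneg ht0 htp.le)
    (show (0:ℝ) ≤ 1/(t+1) from by positivity)
    (by field_simp)
  have hpt : (t/(t+1)) • (n:ℝ) + (1/(t+1)) • (b + 1) = (n:ℝ) + 1 := by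
    have : b = (n:ℝ) + t := by simp [ht]
    rw [this, smul_eq_mul, smul_eq_mul, div_mul_eq_mul_div, div_mul_eq_mul_div, ← add_div, div_eq_iff htp.ne']; ring
  rw [hpt] at key
  simp only [Function.comp_apply, smul_eq_mul] at key
  -- Gamma values at integers
  obtain ⟨m, rfl⟩ : ∃ m, n = m + 1 := ⟨n - 1, by omega⟩
  have hGn1 : Real.Gamma ((m+1:ℕ):ℝ) = m.factorial := by
    push_cast
    exact_mod_cast Real.Gamma_nat_eq_factorial m
  have hGn2 : Real.Gamma ((((m+1:ℕ)):ℝ) + 1) = (m+1).factorial := by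
    have := Real.Gamma_nat_eq_factorial (m+1)
    push_cast at this ⊢
    convert this using 2
  rw [hGn1] at key
  rw [hGn2] at key
  -- extract lower bound for log Γ (b+1)
  have hfm : (0:ℝ) < m.factorial := by exact_mod_cast m.factorial_pos
  have hfm1 : (0:ℝ) < (m+1).factorial := by exact_mod_cast (m+1).factorial_pos
  set F1 := Real.log (m.factorial : ℝ) with hF1
  set F2 := Real.log ((m+1).factorial : ℝ) with hF2
  set L := Real.log (Real.Gamma (b+1)) with hL
  have hlf : F2 = Real.log ((m+1:ℕ):ℝ) + F1 := by
    rw [hF2, hF1, show ((m+1).factorial : ℝ) = ((m+1:ℕ):ℝ) * (m.factorial:ℝ) by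
      rw [Nat.factorial_succ]; push_cast; ring,
      Real.log_mul (by positivity) (by positivity)]
  have e1 : t/(t+1) * F1 + 1/(t+1) * L = (t * F1 + L)/(t+1) := by field_simp
  rw [e1] at key
  have key2 : F2 * (t+1) ≤ t * F1 + L := (le_div_iff₀ htp).mp key
  have hlow : F2 + t * Real.log ((m+1:ℕ):ℝ) ≤ L := by
    have : t * F2 - t * F1 = t * Real.log ((m+1:ℕ):ℝ) := by rw [hlf]; ring
    nlinarith [key2]
  -- exponentiate
  have hGpos : 0 < Real.Gamma (b+1) := Real.Gamma_pos_of_pos (by linarith)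
  have hmain : ((m+1).factorial : ℝ) * ((m+1:ℕ):ℝ) ^ t ≤ Real.Gamma (b+1) := by
    have h := Real.exp_le_exp.mpr hlow
    rw [Real.exp_add, hF2, Real.exp_log hfm1, hL, Real.exp_log hGpos] at h
    rwa [Real.rpow_def_of_pos (by positivity : (0:ℝ) < ((m+1:ℕ):ℝ)), mul_comm (Real.log _) t]
  -- combine with factorial bound
  have hfb : ((m+1:ℕ):ℝ) ^ (m+1 : ℕ) * Real.exp (-((m+1:ℕ):ℝ)) ≤ (m+1).factorial := by
    have h1 := pow_le_exp_mul_factorial (m+1)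
    have h2 : (0:ℝ) < Real.exp (((m+1:ℕ)):ℝ) := Real.exp_pos _
    rw [Real.exp_neg]
    calc ((m+1:ℕ):ℝ) ^ (m+1 : ℕ) * (Real.exp (((m+1:ℕ)):ℝ))⁻¹
        ≤ (Real.exp (((m+1:ℕ)):ℝ) * (m+1).factorial) * (Real.exp (((m+1:ℕ)):ℝ))⁻¹ := by
          apply mul_le_mul_of_nonneg_right h1 (by positivity)
      _ = (m+1).factorial := by field_simp
  have hx : ((m+1:ℕ):ℝ) ^ b = ((m+1:ℕ):ℝ) ^ (m+1:ℕ) * ((m+1:ℕ):ℝ) ^ t := by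
    rw [← Real.rpow_natCast ((m+1:ℕ):ℝ) (m+1), ← Real.rpow_add (by positivity)]
    congr 1
    rw [ht]; push_cast; ring
  calc ((m+1:ℕ):ℝ) ^ b * Real.exp (-((m+1:ℕ):ℝ))
      = (((m+1:ℕ):ℝ) ^ (m+1:ℕ) * Real.exp (-((m+1:ℕ):ℝ))) * ((m+1:ℕ):ℝ) ^ t := by
        rw [hx]; ring
    _ ≤ ((m+1).factorial : ℝ) * ((m+1:ℕ):ℝ) ^ t := by
        apply mul_le_mul_of_nonneg_right hfb (by positivity)
    _ ≤ Real.Gamma (b+1) := hmain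


lemma gamma_central {a b K : ℝ} (ha : 0 < a) (hab : a ≤ b) (hbK : b ≤ K) (hK : 1 ≤ K) :
    Real.sqrt (2*Real.pi) / Real.exp 2 * a ^ a * Real.exp (-K) ≤ Real.Gamma (b+1) := by
  have hb0 : 0 < b := lt_of_lt_of_le ha hab
  have hsqrt : Real.sqrt (2*Real.pi) ≤ Real.exp 1 := by
    have h1 : (2*Real.pi) ≤ (Real.exp 1)^2 := by
      nlinarith [Real.pi_lt_d2, Real.exp_one_gt_d9]
    calc Real.sqrt (2*Real.pi) ≤ Real.sqrt ((Real.exp 1)^2) := Real.sqrt_le_sqrt h1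
      _ = Real.exp 1 := Real.sqrt_sq (Real.exp_pos 1).le
  have hC : Real.sqrt (2*Real.pi)/Real.exp 2 ≤ Real.exp (-1) := by
    have h2 : Real.exp 1 / Real.exp 2 = Real.exp (-1) := by
      rw [← Real.exp_sub]; norm_num
    calc Real.sqrt (2*Real.pi)/Real.exp 2 ≤ Real.exp 1/Real.exp 2 := by gcongr
      _ = Real.exp (-1) := h2
  have hexpneg1 : Real.exp (-1) ≤ 1 := Real.exp_le_one_iff.mpr (by norm_num)
  have hC1 : Real.sqrt (2*Real.pi)/Real.exp 2 ≤ 1 := le_trans hC hexpneg1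
  have hCpos : (0:ℝ) ≤ Real.sqrt (2*Real.pi)/Real.exp 2 := by positivity
  by_cases hb1 : b < 1
  · -- small case : use Gamma ≥ 1/2 on [1,2]
    have ha1 : a ≤ 1 := by linarith
    have haa : a ^ a ≤ 1 := Real.rpow_le_one ha.le ha1 ha.le
    have haa0 : (0:ℝ) ≤ a ^ a := (Real.rpow_pos_of_pos ha a).le
    have hKe : Real.exp (-K) ≤ Real.exp (-1) := Real.exp_le_exp.mpr (by linarith)
    have hhalf : (1/2:ℝ) ≤ Real.Gamma (b+1) := gamma_half (by linarith) (by linarith)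
    have h3 : Real.exp (-1) * Real.exp (-1) ≤ 1/2 := by
      nlinarith [Real.exp_neg_one_lt_d9, Real.exp_pos (-1:ℝ)]
    have e1 : Real.sqrt (2*Real.pi) / Real.exp 2 * a ^ a ≤ Real.exp (-1) := by
      nlinarith
    have hstep : Real.sqrt (2*Real.pi) / Real.exp 2 * a ^ a * Real.exp (-K)
        ≤ Real.exp (-1) * Real.exp (-1) :=
      mul_le_mul e1 hKe (Real.exp_pos _).le (Real.exp_pos _).le
    linarith
  · push_neg at hb1
    set n := ⌊b⌋₊ with hn
    have hn1 : 1 ≤ n := Nat.le_floor (by exact_mod_cast hb1)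
    have hnb : (n:ℝ) ≤ b := Nat.floor_le hb0.le
    have hbn : b < (n:ℝ) + 1 := Nat.lt_floor_add_one b
    have hn0 : (0:ℝ) < n := by exact_mod_cast hn1
    have hn0' : (1:ℝ) ≤ n := by exact_mod_cast hn1
    have hkey := gamma_interp_bound hn1 hnb hbn
    have hsuff : Real.sqrt (2*Real.pi) / Real.exp 2 * a ^ a * Real.exp (-K)
        ≤ (n:ℝ) ^ b * Real.exp (-(n:ℝ)) := by
      by_cases ha1 : a ≤ 1
      · have haa : a ^ a ≤ 1 := Real.rpow_le_one ha.le ha1 ha.le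
        have haa0 : (0:ℝ) ≤ a ^ a := (Real.rpow_pos_of_pos ha a).le
        have h1 : (1:ℝ) ≤ (n:ℝ) ^ b := Real.one_le_rpow hn0' hb0.le
        have hKe : Real.exp (-K) ≤ Real.exp (-(n:ℝ)) := Real.exp_le_exp.mpr (by linarith)
        have e1 : Real.sqrt (2*Real.pi) / Real.exp 2 * a ^ a ≤ 1 := by nlinarith
        have e3 : Real.sqrt (2*Real.pi) / Real.exp 2 * a ^ a * Real.exp (-K)
            ≤ 1 * Real.exp (-(n:ℝ)) :=
          mul_le_mul e1 hKe (Real.exp_pos _).le zero_le_one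
        have e4 : 1 * Real.exp (-(n:ℝ)) ≤ (n:ℝ) ^ b * Real.exp (-(n:ℝ)) :=
          mul_le_mul_of_nonneg_right h1 (Real.exp_pos _).le
        linarith
      · push_neg at ha1
        have haa : a ^ a ≤ b ^ b := by
          calc a ^ a ≤ b ^ a := Real.rpow_le_rpow ha.le hab ha.le
            _ ≤ b ^ b := Real.rpow_le_rpow_of_exponent_le (by linarith) hab
        -- log comparison : b log b - b - 1 ≤ b log n - n
        have hlog : b * Real.log b - b - 1 ≤ b * Real.log (n:ℝ) - (n:ℝ) := by
          have hdiv : Real.log b - Real.log (n:ℝ) ≤ (b - n)/n := by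
            rw [← Real.log_div hb0.ne' hn0.ne']
            have := Real.log_le_sub_one_of_pos (show (0:ℝ) < b/n by positivity)
            calc Real.log (b/(n:ℝ)) ≤ b/(n:ℝ) - 1 := this
              _ = (b - n)/n := by field_simp
          have h2 : b * (Real.log b - Real.log (n:ℝ)) ≤ b * ((b - n)/n) :=
            mul_le_mul_of_nonneg_left hdiv hb0.le
          have h3 : b * ((b - n)/n) ≤ b - n + 1 := by
            rw [← mul_div_assoc, div_le_iff₀ hn0]
            nlinarith
          nlinarith
        have hbb : b ^ b = Real.exp (b * Real.log b) := by
          rw [Real.rpow_def_of_pos hb0, mul_comm]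
        have hnbp : (n:ℝ) ^ b = Real.exp (b * Real.log (n:ℝ)) := by
          rw [Real.rpow_def_of_pos hn0, mul_comm]
        have hKe : Real.exp (-K) ≤ Real.exp (-b) := Real.exp_le_exp.mpr (by linarith)
        have haa0 : (0:ℝ) ≤ a ^ a := (Real.rpow_pos_of_pos ha a).le
        have e1 : Real.sqrt (2*Real.pi) / Real.exp 2 * a ^ a
            ≤ Real.exp (-1) * Real.exp (b * Real.log b) := by
          apply mul_le_mul hC _ haa0 (Real.exp_pos _).le
          rw [← hbb]; exact haa
        have e2 : Real.sqrt (2*Real.pi) / Real.exp 2 * a ^ a * Real.exp (-K)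
            ≤ Real.exp (-1) * Real.exp (b * Real.log b) * Real.exp (-b) :=
          mul_le_mul e1 hKe (Real.exp_pos _).le (by positivity)
        have e3 : Real.exp (-1) * Real.exp (b * Real.log b) * Real.exp (-b)
            = Real.exp (b * Real.log b - b - 1) := by
          rw [← Real.exp_add, ← Real.exp_add]; congr 1; ring
        have e4 : Real.exp (b * Real.log b - b - 1) ≤ Real.exp (b * Real.log (n:ℝ) - (n:ℝ)) :=
          Real.exp_le_exp.mpr hlog
        have e5 : Real.exp (b * Real.log (n:ℝ) - (n:ℝ)) = (n:ℝ) ^ b * Real.exp (-(n:ℝ)) := by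
          rw [hnbp, ← Real.exp_add, sub_eq_add_neg]
        linarith
    exact le_trans hsuff hkey


/-- For `0 < α₀ ≤ 1`, `α ∈ [α₀, 1]` and every integer `k ≥ 1`, Stirling's
formula gives `(1/α₀)^k / Γ(αk + 1) ≤ (e²/√(2π)) (e / (α₀^{α₀+1} k^{α₀}))^k`. -/
theorem mittagLeffler_term_bound (α₀ α : ℝ) (hα₀ : 0 < α₀) (hα₀1 : α₀ ≤ 1)
    (hα₀α : α₀ ≤ α) (hα : α ≤ 1) (k : ℕ) (hk : 1 ≤ k) :
    (1 / α₀) ^ k / Real.Gamma (α * k + 1) ≤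
      Real.exp 2 / Real.sqrt (2 * Real.pi) *
        (Real.exp 1 / (α₀ ^ (α₀ + 1) * (k : ℝ) ^ α₀)) ^ k := by
  have hk1 : (1:ℝ) ≤ (k:ℝ) := by exact_mod_cast hk
  have hk0 : (0:ℝ) < (k:ℝ) := by linarith
  have ha : (0:ℝ) < α₀ * k := by positivity
  have hab : α₀ * k ≤ α * k := by nlinarith
  have hbK : α * k ≤ (k:ℝ) := by nlinarith
  have hcen := gamma_central ha hab hbK hk1
  have hGpos : 0 < Real.Gamma (α * k + 1) := Real.Gamma_pos_of_pos (by nlinarith)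
  have hDpos : (0:ℝ) < Real.sqrt (2*Real.pi) / Real.exp 2 * (α₀*k) ^ (α₀*k) * Real.exp (-(k:ℝ)) := by
    have h2pi : (0:ℝ) < 2 * Real.pi := by positivity
    positivity
  -- key algebraic identity
  have hbase : α₀ ^ (α₀ + 1) * (k:ℝ) ^ α₀ = α₀ * (α₀ * k) ^ α₀ := by
    rw [Real.rpow_add hα₀, Real.rpow_one, Real.mul_rpow hα₀.le hk0.le]
    ring
  have hpowk : (α₀ ^ (α₀ + 1) * (k:ℝ) ^ α₀) ^ k = α₀ ^ k * (α₀ * k) ^ (α₀ * k) := by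
    rw [hbase, mul_pow]
    congr 1
    rw [← Real.rpow_natCast ((α₀ * k) ^ α₀) k, ← Real.rpow_mul (by positivity)]
  have hRHS : Real.exp 2 / Real.sqrt (2 * Real.pi) *
        (Real.exp 1 / (α₀ ^ (α₀ + 1) * (k : ℝ) ^ α₀)) ^ k
      = (1/α₀) ^ k /
        (Real.sqrt (2*Real.pi) / Real.exp 2 * (α₀*k) ^ (α₀*k) * Real.exp (-(k:ℝ))) := by
    rw [div_pow, hpowk, Real.exp_one_pow, Real.exp_neg]
    have hsq : (0:ℝ) < Real.sqrt (2*Real.pi) := Real.sqrt_pos.mpr (by positivity)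
    have h1 : (0:ℝ) < (α₀*k) ^ (α₀*k) := Real.rpow_pos_of_pos ha _
    have h2 : (0:ℝ) < Real.exp (k:ℝ) := Real.exp_pos _
    have h3 : (0:ℝ) < Real.exp 2 := Real.exp_pos _
    have h4 : (0:ℝ) < α₀ ^ k := pow_pos hα₀ k
    field_simp
    ring_nf
    rw [← mul_pow, mul_inv_cancel₀ hα₀.ne', one_pow]
  rw [hRHS]
  have hnum : (0:ℝ) ≤ (1/α₀) ^ k := by positivity
  gcongr
end

section
/- Let 0 < α₀ ≤ 1 and let c ≥ 0 be a real number. Then the map α ↦ E_α(c) = ∑_{k=0}^∞ c^k / Γ(αk + 1) is continuous on the interval [α₀, 1]. -/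
open Real Set Filter

/-- Gamma is continuous at positive points. -/
lemma myContinuousAt_Gamma {x : ℝ} (hx : 0 < x) : ContinuousAt Real.Gamma x := by
  refine (Real.differentiableAt_Gamma ?_).continuousAt
  exact fun m => ((neg_nonpos.mpr (Nat.cast_nonneg m)).trans_lt hx).ne'

/-- Log-convexity interpolation: `x Γ(x) ≤ Γ(x+a) (x+a)^(1-a)` for `0 < a ≤ 1`, `0 < x`. -/
lemma gamma_interp {a x : ℝ} (ha : 0 < a) (ha1 : a ≤ 1) (hx : 0 < x) :
    x * Real.Gamma x ≤ Real.Gamma (x + a) * (x + a) ^ (1 - a) := by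
  have hxa : 0 < x + a := by linarith
  have hxa1 : 0 < x + a + 1 := by linarith
  have hconv := Real.convexOn_log_Gamma.2 (mem_Ioi.mpr hxa) (mem_Ioi.mpr hxa1)
      ha.le (by linarith : (0:ℝ) ≤ 1 - a) (by ring)
  have harg : a • (x + a) + (1 - a) • (x + a + 1) = x + 1 := by
    simp only [smul_eq_mul]; ring
  rw [harg] at hconv
  simp only [Function.comp_apply, smul_eq_mul] at hconv
  rw [Real.Gamma_add_one hx.ne', Real.Gamma_add_one hxa.ne'] at hconv
  have hGx : 0 < Real.Gamma x := Real.Gamma_pos_of_pos hx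
  have hGxa : 0 < Real.Gamma (x + a) := Real.Gamma_pos_of_pos hxa
  rw [Real.log_mul hx.ne' hGx.ne', Real.log_mul hxa.ne' hGxa.ne'] at hconv
  -- hconv : log x + log Γ x ≤ a * log Γ(x+a) + (1-a) * (log (x+a) + log Γ(x+a))
  have key : Real.log x + Real.log (Real.Gamma x)
      ≤ Real.log (Real.Gamma (x + a)) + (1 - a) * Real.log (x + a) := by nlinarith
  have := Real.exp_le_exp.mpr key
  rw [Real.exp_add, Real.exp_add, Real.exp_log hx, Real.exp_log hGx,
    Real.exp_log hGxa] at this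
  rwa [Real.rpow_def_of_pos hxa, mul_comm (Real.log (x + a)) (1 - a)]

/-- Summability of the Mittag-Leffler series. -/
lemma summable_ml {a : ℝ} (ha : 0 < a) (ha1 : a ≤ 1) {c : ℝ} (hc : 0 ≤ c) :
    Summable (fun k : ℕ => c ^ k / Real.Gamma (a * k + 1)) := by
  refine summable_of_ratio_norm_eventually_le (r := 1/2) (by norm_num) ?_
  have h1 : Tendsto (fun k : ℕ => a * (k : ℝ) + 1) atTop atTop := by
    apply tendsto_atTop_add_const_right
    exact (tendsto_natCast_atTop_atTop (R := ℝ)).const_mul_atTop ha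
  have h2 : Tendsto (fun k : ℕ => (a * (k : ℝ) + 1) ^ a) atTop atTop :=
    (tendsto_rpow_atTop ha).comp h1
  filter_upwards [h2.eventually_ge_atTop (4 * c + 4), h1.eventually_ge_atTop 1]
    with k hk hk1
  set x : ℝ := a * (k : ℝ) + 1 with hxdef
  have hx : 0 < x := by linarith
  have hxa : 0 < x + a := by linarith
  have hGx : 0 < Real.Gamma x := Real.Gamma_pos_of_pos hx
  have hGxa : 0 < Real.Gamma (x + a) := Real.Gamma_pos_of_pos hxa
  have harg : a * ((k : ℕ) + 1 : ℕ) + 1 = x + a := by push_cast; ring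
  -- (x+a)^(1-a) ≤ 2*x/x^a
  have hxapos : (0:ℝ) < x ^ a := Real.rpow_pos_of_pos hx a
  have h2xpos : (0:ℝ) < 2 * x := by linarith
  have hb1 : (x + a) ^ (1 - a) ≤ (2 * x) ^ (1 - a) :=
    Real.rpow_le_rpow hxa.le (by linarith) (by linarith)
  have hb2 : (2 * x) ^ (1 - a) = (2 * x) / (2 * x) ^ a := by
    rw [Real.rpow_sub h2xpos, Real.rpow_one]
  have hb3 : x ^ a ≤ (2 * x) ^ a := Real.rpow_le_rpow hx.le (by linarith) ha.le
  have hb4 : (2 * x) / (2 * x) ^ a ≤ (2 * x) / x ^ a :=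
    div_le_div_of_nonneg_left (by linarith) hxapos hb3
  have hb5 : (2 * x) / x ^ a ≤ (2 * x) / (4 * c + 4) :=
    div_le_div_of_nonneg_left (by linarith) (by linarith) hk
  have hbound : 2 * c * (x + a) ^ (1 - a) ≤ x := by
    have h6 : (x + a) ^ (1 - a) ≤ (2 * x) / (4 * c + 4) := by
      calc (x + a) ^ (1 - a) ≤ (2 * x) ^ (1 - a) := hb1
        _ = (2 * x) / (2 * x) ^ a := hb2
        _ ≤ (2 * x) / x ^ a := hb4
        _ ≤ (2 * x) / (4 * c + 4) := hb5
    have h7 : 2 * c * ((2 * x) / (4 * c + 4)) ≤ x := by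
      rw [mul_div_assoc']
      rw [div_le_iff₀ (by linarith)]
      nlinarith
    calc 2 * c * (x + a) ^ (1 - a) ≤ 2 * c * ((2 * x) / (4 * c + 4)) := by
          apply mul_le_mul_of_nonneg_left h6 (by linarith)
      _ ≤ x := h7
  -- Γ(x+a) ≥ 2c Γ(x)
  have hkey : 2 * c * Real.Gamma x ≤ Real.Gamma (x + a) := by
    have hrp : (0:ℝ) < (x + a) ^ (1 - a) := Real.rpow_pos_of_pos hxa _
    have h8 : 2 * c * Real.Gamma x * (x + a) ^ (1 - a)
        ≤ Real.Gamma (x + a) * (x + a) ^ (1 - a) := by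
      calc 2 * c * Real.Gamma x * (x + a) ^ (1 - a)
          = (2 * c * (x + a) ^ (1 - a)) * Real.Gamma x := by ring
        _ ≤ x * Real.Gamma x := by
            apply mul_le_mul_of_nonneg_right hbound hGx.le
        _ ≤ Real.Gamma (x + a) * (x + a) ^ (1 - a) := gamma_interp ha ha1 hx
    exact le_of_mul_le_mul_right h8 hrp
  -- conclude
  rw [harg]
  have hterm1 : (0:ℝ) ≤ c ^ (k+1) / Real.Gamma (x + a) := by positivity
  have hterm2 : (0:ℝ) ≤ c ^ k / Real.Gamma x := by positivity
  rw [Real.norm_of_nonneg hterm1, Real.norm_of_nonneg hterm2]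
  rcases eq_or_lt_of_le hc with hc0 | hc0
  · have : c ^ (k + 1) = 0 := by rw [← hc0]; simp
    rw [this, zero_div]
    positivity
  · have hcG : 0 < 2 * c * Real.Gamma x := by positivity
    calc c ^ (k+1) / Real.Gamma (x + a) ≤ c ^ (k+1) / (2 * c * Real.Gamma x) :=
          div_le_div_of_nonneg_left (by positivity) hcG hkey
      _ = 1 / 2 * (c ^ k / Real.Gamma x) := by
          field_simp
          ring

/-- Gamma is at most 1 on `[1,2]`. -/
lemma gamma_le_one_of_mem {y : ℝ} (h1 : 1 ≤ y) (h2 : y ≤ 2) : Real.Gamma y ≤ 1 := by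
  have := Real.convexOn_Gamma.le_on_segment (x := 1) (y := 2)
    (mem_Ioi.mpr one_pos) (mem_Ioi.mpr two_pos)
    (z := y) (by rw [segment_eq_Icc one_le_two]; exact ⟨h1, h2⟩)
  rwa [Real.Gamma_one, Real.Gamma_two, max_self] at this

/-- For `0 < α₀ ≤ 1` and a real constant `c ≥ 0`, the map
`α ↦ E_α(c) = ∑_{k=0}^∞ c^k / Γ(αk + 1)` is continuous on `[α₀, 1]`. -/
theorem continuousOn_mittagLeffler_const (α₀ : ℝ) (hα₀ : 0 < α₀) (hα₀1 : α₀ ≤ 1)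
    (c : ℝ) (hc : 0 ≤ c) :
    ContinuousOn (fun α : ℝ => ∑' k : ℕ, c ^ k / Real.Gamma (α * k + 1))
      (Set.Icc α₀ 1) := by
  -- minimum of Gamma on the compact interval [1, 2/α₀ + 2]
  set B : ℝ := 2 / α₀ + 2 with hB
  have hB2 : (2:ℝ) ≤ B := by
    rw [hB]
    have : (0:ℝ) < 2 / α₀ := by positivity
    linarith
  have hB1 : (1:ℝ) ≤ B := by linarith
  have hcompact : IsCompact (Set.Icc (1:ℝ) B) := isCompact_Icc
  have hcont : ContinuousOn Real.Gamma (Set.Icc (1:ℝ) B) := by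
    intro y hy
    exact (myContinuousAt_Gamma (by linarith [hy.1])).continuousWithinAt
  obtain ⟨z, hzmem, hzmin⟩ := hcompact.exists_isMinOn ⟨1, by constructor <;> linarith⟩ hcont
  set ε : ℝ := Real.Gamma z with hε
  have hεpos : 0 < ε := Real.Gamma_pos_of_pos (by linarith [hzmem.1])
  have hε1 : ε ≤ 1 := by
    have := hzmin (Set.mem_Icc.mpr ⟨one_le_two, hB2⟩)
    simp only [Set.mem_setOf_eq] at this
    rwa [Real.Gamma_two] at this
  -- key uniform bound
  have hkey : ∀ (n : ℕ), ∀ α ∈ Set.Icc α₀ 1,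
      ε * Real.Gamma (α₀ * n + 1) ≤ Real.Gamma (α * n + 1) := by
    intro n α hα
    obtain ⟨hα1, hα2⟩ := hα
    have hn0 : (0:ℝ) ≤ (n:ℝ) := Nat.cast_nonneg n
    have hlow : α₀ * n + 1 ≤ α * n + 1 := by nlinarith
    by_cases hcase : 1 ≤ α₀ * n
    · -- both arguments ≥ 2, use monotonicity
      have h1 : (2:ℝ) ≤ α₀ * n + 1 := by linarith
      have h2 : (2:ℝ) ≤ α * n + 1 := by linarith
      have hmono := Real.Gamma_strictMonoOn_Ici.monotoneOn
        (Set.mem_Ici.mpr h1) (Set.mem_Ici.mpr h2) hlow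
      have hpos : 0 < Real.Gamma (α₀ * n + 1) := Real.Gamma_pos_of_pos (by linarith)
      nlinarith
    · -- small n : α₀ * n < 1
      push_neg at hcase
      have hnlt : (n:ℝ) < 1 / α₀ := by
        rw [lt_div_iff₀ hα₀]; linarith [mul_comm α₀ (n:ℝ)]
      have hmem : α * n + 1 ∈ Set.Icc (1:ℝ) B := by
        constructor
        · nlinarith
        · have h3 : α * n ≤ (n:ℝ) := by nlinarith
          have h4 : (n:ℝ) < 1 / α₀ := hnlt
          have h5 : 1 / α₀ ≤ 2 / α₀ := by
            rw [div_le_div_iff₀ hα₀ hα₀]; nlinarith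
          have := hα₀
          rw [hB]
          nlinarith
      have hmin := hzmin hmem
      have hG1 : Real.Gamma (α₀ * n + 1) ≤ 1 :=
        gamma_le_one_of_mem (by nlinarith) (by linarith)
      have hGpos : 0 < Real.Gamma (α₀ * n + 1) := Real.Gamma_pos_of_pos (by nlinarith)
      calc ε * Real.Gamma (α₀ * n + 1) ≤ ε * 1 := by
            apply mul_le_mul_of_nonneg_left hG1 hεpos.le
        _ = ε := mul_one ε
        _ ≤ Real.Gamma (α * n + 1) := hmin
  -- apply the M-test
  refine continuousOn_tsum
    (f := fun (k : ℕ) (α : ℝ) => c ^ k / Real.Gamma (α * k + 1))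
    (u := fun k : ℕ => (c ^ k / Real.Gamma (α₀ * k + 1)) / ε)
    ?_ ((summable_ml hα₀ hα₀1 hc).div_const ε) ?_
  · intro i
    apply ContinuousOn.div continuousOn_const
    · intro α hα
      have hpos : 0 < α * i + 1 := by
        have : 0 ≤ α * i := mul_nonneg (hα₀.le.trans hα.1) (Nat.cast_nonneg i)
        linarith
      have hcont2 : ContinuousAt (fun α : ℝ => Real.Gamma (α * i + 1)) α :=
        ContinuousAt.comp (g := Real.Gamma) (myContinuousAt_Gamma hpos)
          ((by fun_prop : Continuous (fun α : ℝ => α * i + 1)).continuousAt)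
      exact hcont2.continuousWithinAt
    · intro α hα
      have hpos : 0 < α * i + 1 := by
        have : 0 ≤ α * i := mul_nonneg (hα₀.le.trans hα.1) (Nat.cast_nonneg i)
        linarith
      exact (Real.Gamma_pos_of_pos hpos).ne'
  · intro n α hα
    have hpos : 0 < α * n + 1 := by
      have : 0 ≤ α * n := mul_nonneg (hα₀.le.trans hα.1) (Nat.cast_nonneg n)
      linarith
    have hGpos : 0 < Real.Gamma (α * n + 1) := Real.Gamma_pos_of_pos hpos
    have hG0pos : 0 < Real.Gamma (α₀ * n + 1) := by
      apply Real.Gamma_pos_of_pos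
      have : 0 ≤ α₀ * n := mul_nonneg hα₀.le (Nat.cast_nonneg n)
      linarith
    rw [Real.norm_of_nonneg (by positivity)]
    show c ^ n / Real.Gamma (α * n + 1) ≤ c ^ n / Real.Gamma (α₀ * n + 1) / ε
    rw [div_div]
    exact div_le_div_of_nonneg_left (by positivity) (mul_pos hG0pos hεpos)
      (by linarith [hkey n α hα])
end

section
/- Let 0 < α < 1, ω ∈ ℂ and u₀ ∈ ℂ, and define u(t) = u₀ E_α(ω t^α) for t ≥ 0. Then for every t > 0 the function Θ(t) = (1/Γ(1-α)) ∫₀^t (t-s)^{-α} u(s) ds is differentiable at t with Θ'(t) = ω u(t) + u₀ t^{-α}/Γ(1-α); equivalently, u is a solution of the Caputo fractional initial value problem D^α u(t) = ω u(t), u(0) = u₀. -/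
open MeasureTheory Filter intervalIntegral

/-- The Mittag-Leffler function `E_α(z) = ∑_{k=0}^∞ z^k / Γ(αk+1)`. -/
noncomputable def mittagLeffler (α : ℝ) (z : ℂ) : ℂ :=
  ∑' k : ℕ, z ^ k / (Real.Gamma (α * k + 1) : ℂ)

section AuxiliaryLemmas
open Set

lemma gamma_conv {α y : ℝ} (hα0 : 0 < α) (hα1 : α < 1) (hy : 0 < y) :
    Real.Gamma (y + 1) ≤ Real.Gamma (y + α) * (y + α) ^ (1 - α) := by
  have h1 : (0:ℝ) < y + α := by linarith
  have h2 : (0:ℝ) < y + α + 1 := by linarith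
  have hc := Real.convexOn_log_Gamma.2 (Set.mem_Ioi.2 h1) (Set.mem_Ioi.2 h2)
    hα0.le (by linarith : (0:ℝ) ≤ 1 - α) (by ring)
  simp only [Function.comp, smul_eq_mul] at hc
  have hkey : α * (y + α) + (1 - α) * (y + α + 1) = y + 1 := by ring
  rw [hkey] at hc
  have hG1 : Real.Gamma (y + α + 1) = (y + α) * Real.Gamma (y + α) :=
    Real.Gamma_add_one h1.ne'
  have hGp : 0 < Real.Gamma (y + α) := Real.Gamma_pos_of_pos h1
  rw [hG1, Real.log_mul h1.ne' hGp.ne'] at hc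
  have h3 : Real.log (Real.Gamma (y + 1)) ≤
      Real.log (Real.Gamma (y + α)) + (1 - α) * Real.log (y + α) := by linarith
  calc Real.Gamma (y + 1) = Real.exp (Real.log (Real.Gamma (y + 1))) :=
        (Real.exp_log (Real.Gamma_pos_of_pos (by linarith))).symm
    _ ≤ Real.exp (Real.log (Real.Gamma (y + α)) + (1 - α) * Real.log (y + α)) :=
        Real.exp_le_exp.2 h3
    _ = Real.Gamma (y + α) * (y + α) ^ (1 - α) := by
        rw [Real.exp_add, Real.exp_log hGp, Real.rpow_def_of_pos h1]
        ring_nf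

lemma summable_aux {α : ℝ} (hα0 : 0 < α) (hα1 : α < 1) {x b : ℝ} (hx : 0 ≤ x) (hb : 0 < b) :
    Summable (fun k : ℕ => ((k:ℝ) + 1) * x ^ k / Real.Gamma (α * k + b)) := by
  apply summable_of_ratio_norm_eventually_le (r := 1/2) (by norm_num)
  have htend : Tendsto (fun k : ℕ => α * k + b) atTop atTop := by
    apply tendsto_atTop_add_const_right
    exact Tendsto.const_mul_atTop hα0 tendsto_natCast_atTop_atTop
  set Y : ℝ := max 1 ((8 * x + 1) ^ (α⁻¹)) with hY
  filter_upwards [htend.eventually_ge_atTop Y] with k hk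
  set y : ℝ := α * k + b with hyd
  have hy1 : (1:ℝ) ≤ y := le_trans (le_max_left _ _) hk
  have hy : (0:ℝ) < y := by linarith
  have hya : (0:ℝ) < y + α := by linarith
  have hGy : 0 < Real.Gamma y := Real.Gamma_pos_of_pos hy
  have hGya : 0 < Real.Gamma (y + α) := Real.Gamma_pos_of_pos hya
  have hglb : y * Real.Gamma y ≤ Real.Gamma (y + α) * (y + α) ^ (1 - α) := by
    have h := gamma_conv hα0 hα1 hy
    rwa [Real.Gamma_add_one hy.ne'] at h
  have hP : (0:ℝ) < (y + α) ^ (1 - α) := Real.rpow_pos_of_pos hya _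
  have hZ : (0:ℝ) ≤ y ^ (-α) := (Real.rpow_pos_of_pos hy _).le
  have hyZ : y ^ (1 - α) = y * y ^ (-α) := by
    rw [show (1:ℝ) - α = 1 + (-α) by ring, Real.rpow_add hy, Real.rpow_one]
  have h2y : (y + α) ^ (1 - α) ≤ 2 * (y * y ^ (-α)) := by
    rw [← hyZ]
    calc (y + α) ^ (1 - α) ≤ (2 * y) ^ (1 - α) :=
          Real.rpow_le_rpow hya.le (by linarith) (by linarith)
      _ = 2 ^ (1 - α) * y ^ (1 - α) := Real.mul_rpow (by norm_num) hy.le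
      _ ≤ 2 * y ^ (1 - α) := by
          have h21 : (2:ℝ) ^ (1 - α) ≤ 2 := by
            calc (2:ℝ) ^ (1 - α) ≤ 2 ^ (1:ℝ) :=
                  Real.rpow_le_rpow_of_exponent_le (by norm_num) (by linarith)
              _ = 2 := Real.rpow_one 2
          have := Real.rpow_nonneg hy.le (1 - α)
          nlinarith
  have hxy : x * y ^ (-α) ≤ 1/8 := by
    have hYx : (8 * x + 1) ^ (α⁻¹) ≤ y := le_trans (le_max_right _ _) hk
    have h8 : 8 * x + 1 ≤ y ^ α := by
      calc 8 * x + 1 = ((8 * x + 1) ^ (α⁻¹)) ^ α := by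
            rw [← Real.rpow_mul (by linarith), inv_mul_cancel₀ hα0.ne', Real.rpow_one]
        _ ≤ y ^ α := Real.rpow_le_rpow (Real.rpow_nonneg (by linarith) _) hYx hα0.le
    have hypos : (0:ℝ) < y ^ α := Real.rpow_pos_of_pos hy α
    rw [Real.rpow_neg hy.le]
    have e1 : x * (y ^ α)⁻¹ ≤ x * (8 * x + 1)⁻¹ :=
      mul_le_mul_of_nonneg_left (inv_anti₀ (by linarith) h8) hx
    have e2 : x * (8 * x + 1)⁻¹ ≤ 1/8 := by
      rw [← div_eq_mul_inv, div_le_iff₀ (by linarith)]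
      linarith
    linarith
  -- main inequality
  have harg : α * ((k + 1 : ℕ) : ℝ) + b = y + α := by push_cast; ring
  rw [harg]
  rw [Real.norm_of_nonneg (by positivity), Real.norm_of_nonneg (by positivity)]
  push_cast
  rw [show (1:ℝ)/2 * (((k:ℝ) + 1) * x ^ k / Real.Gamma y)
      = (((k:ℝ) + 1) * x ^ k * Real.Gamma y) / (2 * Real.Gamma y ^ 2) by
        field_simp]
  rw [div_le_div_iff₀ hGya (by positivity)]
  -- goal : (k+1+1) * x^(k+1) * (2 * Γy^2) ≤ (k+1)*x^k*Γy * Γ(y+α)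
  have hGfin : (((k:ℝ) + 1) * x ^ k * Real.Gamma y) * (y * Real.Gamma y / (y + α) ^ (1 - α))
      ≤ (((k:ℝ) + 1) * x ^ k * Real.Gamma y) * Real.Gamma (y + α) := by
    apply mul_le_mul_of_nonneg_left _ (by positivity)
    rw [div_le_iff₀ hP]
    exact hglb
  have hA : (0 ≤ x ^ k) := pow_nonneg hx k
  have hstep : ((k:ℝ) + 1 + 1) * x ^ (k + 1) * (2 * Real.Gamma y ^ 2)
      ≤ (((k:ℝ) + 1) * x ^ k * Real.Gamma y) * (y * Real.Gamma y / (y + α) ^ (1 - α)) := by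
    rw [show (((k:ℝ) + 1) * x ^ k * Real.Gamma y) * (y * Real.Gamma y / (y + α) ^ (1 - α))
        = ((((k:ℝ) + 1) * x ^ k * Real.Gamma y) * (y * Real.Gamma y)) / (y + α) ^ (1 - α)
        from by ring, le_div_iff₀ hP, pow_succ]
    have hC : (0:ℝ) ≤ 4 * ((k:ℝ) + 2) * x ^ k * Real.Gamma y ^ 2 * y := by positivity
    have h1 := mul_le_mul_of_nonneg_left hxy hC
    have h2 := mul_le_mul_of_nonneg_left h2y
      (show (0:ℝ) ≤ ((k:ℝ) + 1 + 1) * (x ^ k * x) * (2 * Real.Gamma y ^ 2) by positivity)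
    have hk0 : (0:ℝ) ≤ (k:ℝ) := Nat.cast_nonneg k
    have h3 : (0:ℝ) ≤ x ^ k * Real.Gamma y ^ 2 * y := by positivity
    nlinarith [mul_nonneg hk0 h3]
  linarith



lemma ML_eq (α : ℝ) (ω u₀ : ℂ) {s : ℝ} (hs : 0 ≤ s) :
    u₀ * mittagLeffler α (ω * ((s ^ α : ℝ) : ℂ)) =
      ∑' k : ℕ, (u₀ * ω ^ k / (Real.Gamma (α * k + 1) : ℂ)) * ((s ^ (α * k) : ℝ) : ℂ) := by
  rw [mittagLeffler, ← tsum_mul_left]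
  refine tsum_congr fun k => ?_
  have h1 : ((s ^ α : ℝ) : ℂ) ^ k = ((s ^ (α * k) : ℝ) : ℂ) := by
    rw [← Complex.ofReal_pow, ← Real.rpow_natCast (s ^ α) k, ← Real.rpow_mul hs]
  rw [mul_pow, h1]
  ring

lemma kernel_intable (α : ℝ) (hα0 : 0 < α) (hα1 : α < 1) (k : ℕ) {τ : ℝ} (hτ : 0 < τ) :
    IntervalIntegrable (fun s : ℝ => (τ - s) ^ (-α) * s ^ (α * k)) volume 0 τ := by
  have h1 : IntervalIntegrable (fun s : ℝ => (τ - s) ^ (-α)) volume 0 τ := by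
    have := (intervalIntegrable_rpow' (a := 0) (b := τ) (by linarith : (-1:ℝ) < -α)).comp_sub_left τ
    simpa using this.symm
  refine h1.mul_continuousOn ?_
  exact fun x _ => (Real.continuousAt_rpow_const x _ (Or.inr (by positivity))).continuousWithinAt

lemma kernel_integral (α : ℝ) (hα0 : 0 < α) (hα1 : α < 1) {τ : ℝ} (hτ : 0 < τ) :
    ∫ s in (0:ℝ)..τ, (τ - s) ^ (-α) = τ ^ (1 - α) / (1 - α) := by
  rw [intervalIntegral.integral_comp_sub_left (fun x : ℝ => x ^ (-α)) τ, sub_self, sub_zero,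
    integral_rpow (Or.inl (by linarith))]
  rw [Real.zero_rpow (by linarith : -α + 1 ≠ 0)]
  norm_num
  ring_nf

lemma beta_value (α : ℝ) (hα0 : 0 < α) (hα1 : α < 1) (k : ℕ) {τ : ℝ} (hτ : 0 < τ) :
    ∫ s in (0:ℝ)..τ, ((((τ - s) ^ (-α) * s ^ (α * k)) : ℝ) : ℂ) =
      ((Real.Gamma (α * k + 1) : ℂ) * (Real.Gamma (1 - α) : ℂ) /
        (Real.Gamma (α * k + (2 - α)) : ℂ)) * ((τ ^ (α * k + (1 - α)) : ℝ) : ℂ) := by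
  have h1 : EqOn (fun s : ℝ => ((((τ - s) ^ (-α) * s ^ (α * k)) : ℝ) : ℂ))
      (fun s : ℝ => (s:ℂ) ^ ((((α * k : ℝ) : ℂ) + 1) - 1) * ((τ:ℂ) - s) ^ ((((1 - α : ℝ)) : ℂ) - 1))
      (uIcc 0 τ) := by
    intro s hs
    rw [uIcc_of_le hτ.le] at hs
    simp only
    rw [Complex.ofReal_mul, Complex.ofReal_cpow (by linarith [hs.2] : (0:ℝ) ≤ τ - s),
      Complex.ofReal_cpow hs.1, Complex.ofReal_sub]
    rw [show (((α * k : ℝ) : ℂ) + 1) - 1 = ((α * k : ℝ) : ℂ) by ring,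
      show ((((1 - α : ℝ)) : ℂ) - 1) = ((-α : ℝ) : ℂ) by push_cast; ring]
    ring
  rw [intervalIntegral.integral_congr h1,
    Complex.betaIntegral_scaled (((α * k : ℝ) : ℂ) + 1) ((1 - α : ℝ) : ℂ) hτ]
  have hre1 : 0 < ((((α * k : ℝ) : ℂ)) + 1).re := by
    simp only [Complex.add_re, Complex.ofReal_re, Complex.one_re]; nlinarith [mul_nonneg hα0.le (Nat.cast_nonneg (α:=ℝ) k)]
  have hre2 : 0 < (((1 - α : ℝ) : ℂ)).re := by simp [Complex.ofReal_re]; linarith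
  have hβ := Complex.Gamma_mul_Gamma_eq_betaIntegral hre1 hre2
  have hsum : ((((α * k : ℝ) : ℂ)) + 1) + (((1 - α : ℝ) : ℂ)) = ((α * k + (2 - α) : ℝ) : ℂ) := by
    push_cast; ring
  have hGne : Complex.Gamma (((α * k + (2 - α) : ℝ)) : ℂ) ≠ 0 := by
    rw [Complex.Gamma_ofReal]
    exact_mod_cast (Real.Gamma_pos_of_pos (by nlinarith [mul_nonneg hα0.le (Nat.cast_nonneg (α:=ℝ) k)] : (0:ℝ) < α * k + (2 - α))).ne'
  rw [hsum] at hβ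
  have hbeta : Complex.betaIntegral (((α * k : ℝ) : ℂ) + 1) (((1 - α : ℝ)) : ℂ) =
      Complex.Gamma (((α * k : ℝ) : ℂ) + 1) * Complex.Gamma (((1 - α : ℝ)) : ℂ) /
        Complex.Gamma (((α * k + (2 - α) : ℝ)) : ℂ) := by
    rw [eq_div_iff hGne, hβ]; ring
  rw [hbeta]
  have hexp : ((((α * k : ℝ) : ℂ)) + 1) + (((1 - α : ℝ) : ℂ)) - 1 = ((α * k + (1 - α) : ℝ) : ℂ) := by
    push_cast; ring
  rw [hexp, ← Complex.ofReal_cpow hτ.le]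
  rw [show (((α * k : ℝ) : ℂ)) + 1 = ((α * k + 1 : ℝ) : ℂ) by push_cast; ring]
  rw [Complex.Gamma_ofReal, Complex.Gamma_ofReal, Complex.Gamma_ofReal]
  ring

lemma summable_aux2 {α : ℝ} (hα0 : 0 < α) (hα1 : α < 1) {x b : ℝ} (hx : 0 ≤ x) (hb : 0 < b) :
    Summable (fun k : ℕ => x ^ k / Real.Gamma (α * k + b)) := by
  refine Summable.of_nonneg_of_le (fun k => ?_) (fun k => ?_) (summable_aux hα0 hα1 hx hb)
  · have hpos : (0:ℝ) < Real.Gamma (α * k + b) :=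
      Real.Gamma_pos_of_pos (by nlinarith [mul_nonneg hα0.le (Nat.cast_nonneg (α:=ℝ) k)])
    positivity
  · have hpos : (0:ℝ) < Real.Gamma (α * k + b) :=
      Real.Gamma_pos_of_pos (by nlinarith [mul_nonneg hα0.le (Nat.cast_nonneg (α:=ℝ) k)])
    have hle : x ^ k ≤ ((k:ℝ) + 1) * x ^ k := by
      nlinarith [pow_nonneg hx k, Nat.cast_nonneg (α:=ℝ) k]
    gcongr


lemma norm_coef (α : ℝ) (hα0 : 0 < α) (ω u₀ : ℂ) (k : ℕ) :
    ‖u₀ * ω ^ k / (Real.Gamma (α * k + 1) : ℂ)‖ =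
      ‖u₀‖ * ‖ω‖ ^ k / Real.Gamma (α * k + 1) := by
  have hpos : (0:ℝ) < Real.Gamma (α * k + 1) :=
    Real.Gamma_pos_of_pos (by nlinarith [mul_nonneg hα0.le (Nat.cast_nonneg (α:=ℝ) k)])
  rw [norm_div, norm_mul, norm_pow, Complex.norm_real, Real.norm_of_nonneg hpos.le]

lemma closed_form (α : ℝ) (hα0 : 0 < α) (hα1 : α < 1) (ω u₀ : ℂ) {τ : ℝ} (hτ : 0 < τ) :
    (∫ s in (0:ℝ)..τ, (((τ - s) ^ (-α) : ℝ) : ℂ) * (u₀ * mittagLeffler α (ω * ((s ^ α : ℝ) : ℂ))))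
      = (Real.Gamma (1 - α) : ℂ) *
        ∑' k : ℕ, (u₀ * ω ^ k / (Real.Gamma (α * k + (2 - α)) : ℂ)) *
          ((τ ^ (α * k + (1 - α)) : ℝ) : ℂ) := by
  set F : ℕ → ℝ → ℂ := fun k s => (u₀ * ω ^ k / (Real.Gamma (α * k + 1) : ℂ)) *
    ((((τ - s) ^ (-α) * s ^ (α * k)) : ℝ) : ℂ) with hF
  -- integrability of each F k on Ioc 0 τ
  have hFint : ∀ k, IntegrableOn (F k) (Set.Ioc 0 τ) volume := by
    intro k
    have h1 := (intervalIntegrable_iff_integrableOn_Ioc_of_le hτ.le).1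
      (kernel_intable α hα0 hα1 k hτ)
    exact (h1.ofReal (𝕜 := ℂ)).const_mul _
  -- pointwise identity on Ioc
  have hpt : EqOn (fun s : ℝ => (((τ - s) ^ (-α) : ℝ) : ℂ) *
      (u₀ * mittagLeffler α (ω * ((s ^ α : ℝ) : ℂ)))) (fun s => ∑' k, F k s) (Set.Ioc 0 τ) := by
    intro s hs
    simp only
    rw [ML_eq α ω u₀ hs.1.le, ← tsum_mul_left]
    refine tsum_congr fun k => ?_
    rw [hF]
    push_cast
    ring
  -- bound for the norms
  have hGk : ∀ k : ℕ, (0:ℝ) < Real.Gamma (α * k + 1) := fun k =>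
    Real.Gamma_pos_of_pos (by nlinarith [mul_nonneg hα0.le (Nat.cast_nonneg (α:=ℝ) k)])
  have hBle : ∀ k : ℕ, (∫ s in Set.Ioc (0:ℝ) τ, ‖F k s‖) ≤
      (‖u₀‖ * (τ ^ (1 - α) / (1 - α))) * ((‖ω‖ * τ ^ α) ^ k / Real.Gamma (α * k + 1)) := by
    intro k
    have hker : IntegrableOn (fun s : ℝ => (τ - s) ^ (-α)) (Set.Ioc 0 τ) volume := by
      apply (intervalIntegrable_iff_integrableOn_Ioc_of_le hτ.le).1
      have := (intervalIntegrable_rpow' (a := 0) (b := τ)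
        (by linarith : (-1:ℝ) < -α)).comp_sub_left τ
      simpa using this.symm
    have hmono : (∫ s in Set.Ioc (0:ℝ) τ, ‖F k s‖) ≤
        ∫ s in Set.Ioc (0:ℝ) τ, (‖u₀‖ * ‖ω‖ ^ k / Real.Gamma (α * k + 1) * τ ^ (α * k))
          * (τ - s) ^ (-α) := by
      apply setIntegral_mono_on ((hFint k).norm) (hker.const_mul _) measurableSet_Ioc
      intro s hs
      rw [hF]
      simp only
      rw [norm_mul, norm_coef α hα0 ω u₀ k, Complex.norm_real, Real.norm_of_nonneg
        (mul_nonneg (Real.rpow_nonneg (by linarith [hs.2]) _) (Real.rpow_nonneg hs.1.le _))]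
      have h2 : s ^ (α * k) ≤ τ ^ (α * k) := Real.rpow_le_rpow hs.1.le hs.2
        (mul_nonneg hα0.le (Nat.cast_nonneg k))
      have h3 : (0:ℝ) ≤ (τ - s) ^ (-α) := Real.rpow_nonneg (by linarith [hs.2]) _
      have h4 : (0:ℝ) ≤ ‖u₀‖ * ‖ω‖ ^ k / Real.Gamma (α * k + 1) := by positivity
      calc ‖u₀‖ * ‖ω‖ ^ k / Real.Gamma (α * k + 1) * ((τ - s) ^ (-α) * s ^ (α * k))
          ≤ ‖u₀‖ * ‖ω‖ ^ k / Real.Gamma (α * k + 1) * ((τ - s) ^ (-α) * τ ^ (α * k)) := by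
            apply mul_le_mul_of_nonneg_left _ h4
            exact mul_le_mul_of_nonneg_left h2 h3
        _ = ‖u₀‖ * ‖ω‖ ^ k / Real.Gamma (α * k + 1) * τ ^ (α * k) * (τ - s) ^ (-α) := by ring
    rw [MeasureTheory.integral_const_mul] at hmono
    have hval : (∫ s in Set.Ioc (0:ℝ) τ, (τ - s) ^ (-α)) = τ ^ (1 - α) / (1 - α) := by
      rw [← intervalIntegral.integral_of_le hτ.le, kernel_integral α hα0 hα1 hτ]
    rw [hval] at hmono
    calc (∫ s in Set.Ioc (0:ℝ) τ, ‖F k s‖) ≤ _ := hmono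
      _ = (‖u₀‖ * (τ ^ (1 - α) / (1 - α))) * ((‖ω‖ * τ ^ α) ^ k / Real.Gamma (α * k + 1)) := by
          rw [mul_pow, ← Real.rpow_natCast (τ ^ α) k, ← Real.rpow_mul hτ.le]
          ring
  have hFsum : Summable fun k : ℕ => ∫ s in Set.Ioc (0:ℝ) τ, ‖F k s‖ := by
    apply Summable.of_nonneg_of_le
      (fun k => integral_nonneg fun s => norm_nonneg _) hBle
    exact (summable_aux2 hα0 hα1 (by positivity) one_pos).mul_left _
  -- interchange
  have hinter := MeasureTheory.integral_tsum_of_summable_integral_norm hFint hFsum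
  rw [intervalIntegral.integral_of_le hτ.le, MeasureTheory.setIntegral_congr_fun
    measurableSet_Ioc hpt, ← hinter]
  -- evaluate each integral
  have hterm : ∀ k : ℕ, (∫ s in Set.Ioc (0:ℝ) τ, F k s) = (Real.Gamma (1 - α) : ℂ) *
      ((u₀ * ω ^ k / (Real.Gamma (α * k + (2 - α)) : ℂ)) * ((τ ^ (α * k + (1 - α)) : ℝ) : ℂ)) := by
    intro k
    rw [← intervalIntegral.integral_of_le hτ.le, hF]
    simp only
    rw [intervalIntegral.integral_const_mul, beta_value α hα0 hα1 k hτ]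
    have hne1 : ((Real.Gamma (α * k + 1) : ℝ) : ℂ) ≠ 0 :=
      Complex.ofReal_ne_zero.mpr (hGk k).ne'
    have hak : (0:ℝ) < α * k + (2 - α) := by
      nlinarith [mul_nonneg hα0.le (Nat.cast_nonneg (α:=ℝ) k)]
    have hne2 : ((Real.Gamma (α * k + (2 - α)) : ℝ) : ℂ) ≠ 0 :=
      Complex.ofReal_ne_zero.mpr (Real.Gamma_pos_of_pos hak).ne'
    field_simp
  rw [tsum_congr hterm, tsum_mul_left]

lemma norm_coefb (α : ℝ) (hα0 : 0 < α) (ω u₀ : ℂ) {b : ℝ} (hb : 0 < b) (k : ℕ) :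
    ‖u₀ * ω ^ k / (Real.Gamma (α * k + b) : ℂ)‖ =
      ‖u₀‖ * ‖ω‖ ^ k / Real.Gamma (α * k + b) := by
  have hpos : (0:ℝ) < Real.Gamma (α * k + b) :=
    Real.Gamma_pos_of_pos (by nlinarith [mul_nonneg hα0.le (Nat.cast_nonneg (α:=ℝ) k)])
  rw [norm_div, norm_mul, norm_pow, Complex.norm_real, Real.norm_of_nonneg hpos.le]

lemma deriv_G (α : ℝ) (hα0 : 0 < α) (hα1 : α < 1) (ω u₀ : ℂ) {t : ℝ} (ht : 0 < t) :
    HasDerivAt (fun τ : ℝ => ∑' k : ℕ, (u₀ * ω ^ k / (Real.Gamma (α * k + (2 - α)) : ℂ)) *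
        ((τ ^ (α * k + (1 - α)) : ℝ) : ℂ))
      (∑' k : ℕ, (u₀ * ω ^ k / (Real.Gamma (α * k + (2 - α)) : ℂ)) *
        ((((α * k + (1 - α)) * t ^ (α * k + (1 - α) - 1)) : ℝ) : ℂ)) t := by
  have hb : (0:ℝ) < 2 - α := by linarith
  have hx : (0:ℝ) ≤ ‖ω‖ * (t + 1) := by positivity
  set g : ℕ → ℝ → ℂ := fun k τ => (u₀ * ω ^ k / (Real.Gamma (α * k + (2 - α)) : ℂ)) *
    ((τ ^ (α * k + (1 - α)) : ℝ) : ℂ) with hgdef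
  set g' : ℕ → ℝ → ℂ := fun k τ => (u₀ * ω ^ k / (Real.Gamma (α * k + (2 - α)) : ℂ)) *
    ((((α * k + (1 - α)) * τ ^ (α * k + (1 - α) - 1)) : ℝ) : ℂ) with hg'def
  set u : ℕ → ℝ := fun k => (‖u₀‖ * (t / 2) ^ (-α)) *
    (((k:ℝ) + 1) * (‖ω‖ * (t + 1)) ^ k / Real.Gamma (α * k + (2 - α))) with hudef
  have hu : Summable u := (summable_aux hα0 hα1 hx hb).mul_left _
  have hsub : ∀ k : ℕ, ∀ τ ∈ Set.Ioo (t/2) (t+1), HasDerivAt (g k) (g' k τ) τ := by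
    intro k τ hτ
    have h0 : τ ≠ 0 := (lt_trans (show (0:ℝ) < t/2 by linarith) hτ.1).ne'
    exact ((Real.hasDerivAt_rpow_const (Or.inl h0)).ofReal_comp).const_mul _
  have hbound : ∀ k : ℕ, ∀ τ ∈ Set.Ioo (t/2) (t+1), ‖g' k τ‖ ≤ u k := by
    intro k τ hτ
    have hτ0 : (0:ℝ) < τ := lt_trans (by linarith) hτ.1
    have hG : (0:ℝ) < Real.Gamma (α * k + (2 - α)) :=
      Real.Gamma_pos_of_pos (by nlinarith [mul_nonneg hα0.le (Nat.cast_nonneg (α:=ℝ) k)])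
    have hak : (0:ℝ) ≤ α * k := mul_nonneg hα0.le (Nat.cast_nonneg k)
    have hp : (0:ℝ) < α * k + (1 - α) := by linarith
    rw [hg'def]
    simp only
    rw [norm_mul, norm_coefb α hα0 ω u₀ hb k, Complex.norm_real, Real.norm_of_nonneg
      (mul_nonneg hp.le (Real.rpow_nonneg hτ0.le _))]
    have e1 : α * k + (1 - α) ≤ (k:ℝ) + 1 := by
      have : α * k ≤ (k:ℝ) := by nlinarith [Nat.cast_nonneg (α:=ℝ) k]
      linarith
    have e2 : τ ^ (α * k + (1 - α) - 1) ≤ (t + 1) ^ k * (t/2) ^ (-α) := by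
      have h1 : α * k + (1 - α) - 1 = α * k + (-α) := by ring
      rw [h1, Real.rpow_add hτ0]
      have h2 : τ ^ (α * k) ≤ (t + 1) ^ k := by
        calc τ ^ (α * k) ≤ (t + 1) ^ (α * k) :=
              Real.rpow_le_rpow hτ0.le (by linarith [hτ.2]) hak
          _ ≤ (t + 1) ^ ((k:ℝ)) := Real.rpow_le_rpow_of_exponent_le (by linarith)
              (by nlinarith [Nat.cast_nonneg (α:=ℝ) k])
          _ = (t + 1) ^ k := Real.rpow_natCast _ k
      have h3 : τ ^ (-α) ≤ (t/2) ^ (-α) :=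
        Real.rpow_le_rpow_of_nonpos (by linarith) hτ.1.le (by linarith)
      exact mul_le_mul h2 h3 (Real.rpow_nonneg hτ0.le _) (by positivity)
    rw [hudef]
    simp only
    rw [show (‖u₀‖ * (t / 2) ^ (-α)) * (((k:ℝ) + 1) * (‖ω‖ * (t + 1)) ^ k
        / Real.Gamma (α * k + (2 - α)))
      = (‖u₀‖ * ‖ω‖ ^ k / Real.Gamma (α * k + (2 - α))) *
        (((k:ℝ) + 1) * ((t + 1) ^ k * (t/2) ^ (-α))) from by rw [mul_pow]; ring]
    apply mul_le_mul_of_nonneg_left _ (by positivity)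
    apply mul_le_mul e1 e2 (Real.rpow_nonneg hτ0.le _) (by positivity)
  have hg0 : Summable fun k => g k t := by
    apply Summable.of_norm_bounded ((summable_aux hα0 hα1 hx hb).mul_left
      (‖u₀‖ * (t ^ (1 - α))))
    intro k
    have hG : (0:ℝ) < Real.Gamma (α * k + (2 - α)) :=
      Real.Gamma_pos_of_pos (by nlinarith [mul_nonneg hα0.le (Nat.cast_nonneg (α:=ℝ) k)])
    have hak : (0:ℝ) ≤ α * k := mul_nonneg hα0.le (Nat.cast_nonneg k)
    rw [hgdef]
    simp only
    rw [norm_mul, norm_coefb α hα0 ω u₀ hb k, Complex.norm_real,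
      Real.norm_of_nonneg (Real.rpow_nonneg ht.le _)]
    have e2 : t ^ (α * k + (1 - α)) ≤ (t + 1) ^ k * t ^ (1 - α) := by
      rw [show α * k + (1 - α) = (α * k) + (1 - α) from rfl, Real.rpow_add ht]
      have h2 : t ^ (α * k) ≤ (t + 1) ^ k := by
        calc t ^ (α * k) ≤ (t + 1) ^ (α * k) :=
              Real.rpow_le_rpow ht.le (by linarith) hak
          _ ≤ (t + 1) ^ ((k:ℝ)) := Real.rpow_le_rpow_of_exponent_le (by linarith)
              (by nlinarith [Nat.cast_nonneg (α:=ℝ) k])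
          _ = (t + 1) ^ k := Real.rpow_natCast _ k
      exact mul_le_mul_of_nonneg_right h2 (Real.rpow_nonneg ht.le _)
    calc ‖u₀‖ * ‖ω‖ ^ k / Real.Gamma (α * k + (2 - α)) * t ^ (α * k + (1 - α))
        ≤ ‖u₀‖ * ‖ω‖ ^ k / Real.Gamma (α * k + (2 - α)) * ((t + 1) ^ k * t ^ (1 - α)) :=
          mul_le_mul_of_nonneg_left e2 (by positivity)
      _ ≤ ‖u₀‖ * t ^ (1 - α) * (((k:ℝ) + 1) * (‖ω‖ * (t + 1)) ^ k
          / Real.Gamma (α * k + (2 - α))) := by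
          rw [mul_pow]
          have hk1 : (1:ℝ) ≤ (k:ℝ) + 1 := by linarith [Nat.cast_nonneg (α:=ℝ) k]
          have hnn : (0:ℝ) ≤ ‖u₀‖ * t ^ (1 - α) * ((‖ω‖ ^ k * (t + 1) ^ k)
            / Real.Gamma (α * k + (2 - α))) := by positivity
          calc ‖u₀‖ * ‖ω‖ ^ k / Real.Gamma (α * k + (2 - α)) * ((t + 1) ^ k * t ^ (1 - α))
              = (‖u₀‖ * t ^ (1 - α) * ((‖ω‖ ^ k * (t + 1) ^ k)
                  / Real.Gamma (α * k + (2 - α)))) * 1 := by ring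
            _ ≤ (‖u₀‖ * t ^ (1 - α) * ((‖ω‖ ^ k * (t + 1) ^ k)
                  / Real.Gamma (α * k + (2 - α)))) * ((k:ℝ) + 1) :=
                mul_le_mul_of_nonneg_left hk1 hnn
            _ = ‖u₀‖ * t ^ (1 - α) * (((k:ℝ) + 1) * (‖ω‖ ^ k * (t + 1) ^ k)
                  / Real.Gamma (α * k + (2 - α))) := by ring
  exact hasDerivAt_tsum_of_isPreconnected hu isOpen_Ioo
    (convex_Ioo _ _).isPreconnected hsub hbound
    (Set.mem_Ioo.2 ⟨by linarith, by linarith⟩) hg0 (Set.mem_Ioo.2 ⟨by linarith, by linarith⟩)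

lemma deriv_sum_eq (α : ℝ) (hα0 : 0 < α) (hα1 : α < 1) (ω u₀ : ℂ) {t : ℝ} (ht : 0 < t) :
    (∑' k : ℕ, (u₀ * ω ^ k / (Real.Gamma (α * k + (2 - α)) : ℂ)) *
        ((((α * k + (1 - α)) * t ^ (α * k + (1 - α) - 1)) : ℝ) : ℂ))
      = ω * (u₀ * mittagLeffler α (ω * ((t ^ α : ℝ) : ℂ))) +
          u₀ * ((t ^ (-α) : ℝ) : ℂ) / (Real.Gamma (1 - α) : ℂ) := by
  set h : ℕ → ℂ := fun k => (u₀ * ω ^ k / (Real.Gamma (α * k + (1 - α)) : ℂ)) *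
    ((t ^ (α * k - α) : ℝ) : ℂ) with hhdef
  have hp : ∀ k : ℕ, (0:ℝ) < α * k + (1 - α) := fun k => by
    nlinarith [mul_nonneg hα0.le (Nat.cast_nonneg (α:=ℝ) k)]
  have hcongr : ∀ k : ℕ, (u₀ * ω ^ k / (Real.Gamma (α * k + (2 - α)) : ℂ)) *
      ((((α * k + (1 - α)) * t ^ (α * k + (1 - α) - 1)) : ℝ) : ℂ) = h k := by
    intro k
    have hne : ((Real.Gamma (α * k + (1 - α)) : ℝ) : ℂ) ≠ 0 :=
      Complex.ofReal_ne_zero.mpr (Real.Gamma_pos_of_pos (hp k)).ne'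
    have hpne : (((α * k + (1 - α)) : ℝ) : ℂ) ≠ 0 := Complex.ofReal_ne_zero.mpr (hp k).ne'
    rw [hhdef]
    simp only
    rw [show α * (k:ℝ) + (2 - α) = (α * k + (1 - α)) + 1 from by ring,
      Real.Gamma_add_one (hp k).ne',
      show α * (k:ℝ) + (1 - α) - 1 = α * k - α from by ring,
      Complex.ofReal_mul, Complex.ofReal_mul]
    set P : ℂ := (((α * (k:ℝ) + (1 - α)) : ℝ) : ℂ)
    set G : ℂ := ((Real.Gamma (α * (k:ℝ) + (1 - α)) : ℝ) : ℂ)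
    set X : ℂ := ((t ^ (α * (k:ℝ) - α) : ℝ) : ℂ)
    rw [show u₀ * ω ^ k / (P * G) * (P * X) = u₀ * ω ^ k / G * X * (P / P) from by ring,
      div_self hpne, mul_one]
  have hsum : Summable h := by
    apply Summable.of_norm_bounded ((summable_aux2 hα0 hα1
      (by positivity : (0:ℝ) ≤ ‖ω‖ * t ^ α) (by linarith : (0:ℝ) < 1 - α)).mul_left
      (‖u₀‖ * t ^ (-α)))
    intro k
    rw [hhdef]
    simp only
    rw [norm_mul, norm_coefb α hα0 ω u₀ (by linarith : (0:ℝ) < 1 - α) k, Complex.norm_real,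
      Real.norm_of_nonneg (Real.rpow_nonneg ht.le _)]
    apply le_of_eq
    rw [show α * (k:ℝ) - α = α * k + (-α) from by ring, Real.rpow_add ht, mul_pow,
      ← Real.rpow_natCast (t ^ α) k, ← Real.rpow_mul ht.le]
    ring
  rw [tsum_congr hcongr, Summable.tsum_eq_zero_add hsum]
  have h0 : h 0 = u₀ * ((t ^ (-α) : ℝ) : ℂ) / (Real.Gamma (1 - α) : ℂ) := by
    rw [hhdef]
    norm_num
    ring
  have hrest : ∑' j : ℕ, h (j + 1) = ω * (u₀ * mittagLeffler α (ω * ((t ^ α : ℝ) : ℂ))) := by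
    have hc : ∀ j : ℕ, h (j + 1) =
        ω * ((u₀ * ω ^ j / (Real.Gamma (α * j + 1) : ℂ)) * ((t ^ (α * j) : ℝ) : ℂ)) := by
      intro j
      rw [hhdef]
      simp only
      push_cast
      rw [show α * ((j:ℝ) + 1) + (1 - α) = α * j + 1 from by ring,
        show α * ((j:ℝ) + 1) - α = α * j from by ring]
      ring
    rw [tsum_congr hc, tsum_mul_left, ← ML_eq α ω u₀ ht.le]
  rw [h0, hrest]
  ring

end AuxiliaryLemmas

/-- For `0 < α < 1`, `ω, u₀ ∈ ℂ` and `u(t) = u₀ E_α(ω t^α)`, the function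
`Θ(t) = (1/Γ(1-α)) ∫₀^t (t-s)^{-α} u(s) ds` is differentiable at every `t > 0`
with `Θ'(t) = ω u(t) + u₀ t^{-α}/Γ(1-α)`; i.e. `u` solves the Caputo fractional
initial value problem `D^α u = ω u`, `u(0) = u₀`. -/
theorem mittagLeffler_solves_caputo (α : ℝ) (hα0 : 0 < α) (hα1 : α < 1) (ω u₀ : ℂ) :
    ∀ t : ℝ, 0 < t →
      HasDerivAt (fun τ : ℝ => (1 / (Real.Gamma (1 - α) : ℂ)) *
          ∫ s in (0:ℝ)..τ, (((τ - s) ^ (-α) : ℝ) : ℂ) *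
            (u₀ * mittagLeffler α (ω * ((s ^ α : ℝ) : ℂ))))
        (ω * (u₀ * mittagLeffler α (ω * ((t ^ α : ℝ) : ℂ))) +
          u₀ * ((t ^ (-α) : ℝ) : ℂ) / (Real.Gamma (1 - α) : ℂ)) t := by
  intro t ht
  have hGne : ((Real.Gamma (1 - α) : ℝ) : ℂ) ≠ 0 :=
    Complex.ofReal_ne_zero.mpr (Real.Gamma_pos_of_pos (by linarith : (0:ℝ) < 1 - α)).ne'
  have hd := deriv_G α hα0 hα1 ω u₀ ht
  rw [deriv_sum_eq α hα0 hα1 ω u₀ ht] at hd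
  apply hd.congr_of_eventuallyEq
  filter_upwards [isOpen_Ioi.mem_nhds (Set.mem_Ioi.2 ht)] with τ hτ
  rw [closed_form α hα0 hα1 ω u₀ (Set.mem_Ioi.1 hτ)]
  rw [one_div, ← mul_assoc, inv_mul_cancel₀ hGne, one_mul]
end

section
/- Let t ≥ 0 and x ≥ 0 be real numbers. Then lim_{α → 1⁻} E_α((-it)^α x) = e^{-itx}, i.e. E_α(e^{-iαπ/2} t^α x) converges to e^{-itx} as α tends to 1 from the left. -/
open MeasureTheory Filter

/-- Summability of `k ↦ F (k / 2)`. -/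
lemma aux_summable_half (F : ℕ → ℝ) (h : Summable F) (hF : ∀ j, 0 ≤ F j) :
    Summable (fun k : ℕ => F (k / 2)) := by
  have key : Summable (fun p : ℕ × Fin 2 => F p.1) := by
    refine (summable_prod_of_nonneg (fun p => hF p.1)).2 ⟨fun x => summable_of_finite_support ?_, ?_⟩
    · exact Set.toFinite _
    · have : (fun x : ℕ => ∑' _ : Fin 2, F x) = fun x => 2 * F x := by
        funext x
        rw [tsum_fintype]
        simp [Finset.sum_const, two_mul]
      rw [this]
      exact h.mul_left 2
  have := ((Nat.divModEquiv 2).summable_iff (f := fun p : ℕ × Fin 2 => F p.1)).2 key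
  simpa [Function.comp_def, Nat.divModEquiv] using this

/-- Lower bound for Gamma on `[3/2, 2]` via convexity: `Γ(α+1) ≥ α`. -/
lemma aux_gamma_ge_self {α : ℝ} (h1 : 1 / 2 ≤ α) (h2 : α ≤ 1) : α ≤ Real.Gamma (α + 1) := by
  have h3 : Real.Gamma 3 = 2 := by
    have := Real.Gamma_nat_eq_factorial 2
    norm_num at this
    convert this using 2 <;> norm_num
  have hy : (α + 1 : ℝ) ∈ Set.Ioi (0:ℝ) := by simp; linarith
  have h3' : (3 : ℝ) ∈ Set.Ioi (0:ℝ) := by norm_num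
  have h2a : (0:ℝ) < 2 - α := by linarith
  have hl : (0:ℝ) ≤ 1 / (2 - α) := by positivity
  have hm : (0:ℝ) ≤ (1 - α) / (2 - α) := by
    apply div_nonneg <;> linarith
  have hsum : 1 / (2 - α) + (1 - α) / (2 - α) = 1 := by
    rw [← add_div, div_eq_one_iff_eq h2a.ne']
    ring
  have := Real.convexOn_Gamma.2 hy h3' hl hm hsum
  have hcomb : (1 / (2 - α)) • (α + 1) + ((1 - α) / (2 - α)) • (3:ℝ) = 2 := by
    simp only [smul_eq_mul]
    field_simp
    ring
  rw [hcomb, Real.Gamma_two, h3, smul_eq_mul, smul_eq_mul] at this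
  have h2a : (0:ℝ) < 2 - α := by linarith
  rw [div_mul_eq_mul_div, div_mul_eq_mul_div, ← add_div, le_div_iff₀ h2a] at this
  nlinarith [this]

/-- `exp (-(I * π / 2)) = -I`. -/
lemma aux_exp_neg_I_pi_div_two : Complex.exp (-(Complex.I * Real.pi / 2)) = -Complex.I := by
  have : -(Complex.I * (Real.pi : ℂ) / 2) = ((-(Real.pi / 2) : ℝ) : ℂ) * Complex.I := by
    push_cast; ring
  rw [this, Complex.exp_mul_I]
  rw [← Complex.ofReal_cos, ← Complex.ofReal_sin]
  rw [Real.cos_neg, Real.sin_neg, Real.cos_pi_div_two, Real.sin_pi_div_two]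
  simp

/-- Gamma lower bound used for domination. -/
lemma aux_gamma_lb {α : ℝ} (h1 : 1 / 2 ≤ α) (h2 : α ≤ 1) (k : ℕ) :
    (1 / 2 : ℝ) * (k / 2).factorial ≤ Real.Gamma (α * k + 1) := by
  match k with
  | 0 => simp [Real.Gamma_one]; norm_num
  | 1 =>
    simp only [Nat.cast_one, mul_one]
    calc (1/2 : ℝ) * (1/2 : ℕ).factorial = 1/2 := by norm_num
    _ ≤ α := h1
    _ ≤ Real.Gamma (α + 1) := aux_gamma_ge_self h1 h2
  | (n+2) =>
    set k := n + 2
    have hk2 : (2:ℕ) ≤ k := by omega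
    have hmono := Real.Gamma_strictMonoOn_Ici.monotoneOn
    have hb : ((k / 2 : ℕ) : ℝ) + 1 ∈ Set.Ici (2:ℝ) := by
      simp only [Set.mem_Ici]
      have : (1:ℕ) ≤ k / 2 := by omega
      have h1c : (1:ℝ) ≤ ((k / 2 : ℕ) : ℝ) := by exact_mod_cast this
      linarith
    have ha : α * k + 1 ∈ Set.Ici (2:ℝ) := by
      simp only [Set.mem_Ici]
      have hk : (2:ℝ) ≤ (k:ℝ) := by exact_mod_cast hk2
      nlinarith
    have hle : ((k / 2 : ℕ) : ℝ) + 1 ≤ α * k + 1 := by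
      have h1' : ((k / 2 : ℕ) : ℝ) ≤ (k : ℝ) / 2 := by
        have := Nat.div_mul_le_self k 2
        have : ((k / 2 : ℕ) : ℝ) * 2 ≤ (k : ℝ) := by exact_mod_cast this
        linarith
      have : (k:ℝ) / 2 ≤ α * k := by
        have hk0 : (0:ℝ) ≤ k := by positivity
        nlinarith
      linarith
    have := hmono hb ha hle
    rw [Real.Gamma_nat_eq_factorial] at this
    calc (1/2 : ℝ) * (k / 2).factorial ≤ (k / 2).factorial := by
          have : (0:ℝ) ≤ ((k / 2).factorial : ℝ) := by positivity
          linarith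
    _ ≤ Real.Gamma (α * k + 1) := this

/-- norm of `exp(-(I a b / 2))` is 1 for real `a`, `b`. -/
lemma aux_norm_exp (a b : ℝ) : ‖Complex.exp (-(Complex.I * a * b / 2))‖ = 1 := by
  rw [Complex.norm_exp]
  have : (-(Complex.I * a * b / 2)).re = 0 := by
    simp [Complex.div_re, Complex.mul_re, Complex.mul_im]
  rw [this, Real.exp_zero]

/-- For fixed `t ≥ 0` and `x ≥ 0`, `E_α((-it)^α x) = E_α(e^{-iαπ/2} t^α x)`
converges to `e^{-itx}` as `α → 1⁻`. -/
theorem mittagLeffler_tendsto_exp (t x : ℝ) (ht : 0 ≤ t) (hx : 0 ≤ x) :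
    Tendsto (fun α : ℝ => mittagLeffler α
        (Complex.exp (-(Complex.I * α * Real.pi / 2)) * ((t ^ α : ℝ) : ℂ) * (x : ℂ)))
      (nhdsWithin 1 (Set.Iio 1))
      (nhds (Complex.exp (-(Complex.I * t * x)))) := by
  set C : ℝ := max t 1 * x with hCdef
  have hC0 : 0 ≤ C := mul_nonneg (le_max_of_le_right zero_le_one) hx
  set bound : ℕ → ℝ := fun k => C ^ k / ((1/2 : ℝ) * (k / 2).factorial) with hbdef
  have hsum : Summable bound := by
    have hF : Summable (fun j : ℕ => (C^2) ^ j / j.factorial) :=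
      Real.summable_pow_div_factorial _
    have hF0 : ∀ j : ℕ, 0 ≤ (C^2) ^ j / (j.factorial : ℝ) := fun j => by positivity
    have h2 := (aux_summable_half _ hF hF0).mul_left (2 * (1 + C))
    refine h2.of_nonneg_of_le (fun k => by positivity) (fun k => ?_)
    obtain ⟨m, r, hr, hk⟩ : ∃ m r : ℕ, r < 2 ∧ k = 2*m + r :=
      ⟨k/2, k%2, Nat.mod_lt _ two_pos, (Nat.div_add_mod' k 2).symm ▸ by omega⟩
    have hkd : k / 2 = m := by omega
    have key : C ^ k ≤ (1+C) * (C^2)^(k/2) := by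
      rw [hkd, hk, pow_add, pow_mul, mul_comm]
      have : C ^ r ≤ 1 + C := by
        interval_cases r <;> simp <;> linarith
      have h20 : (0:ℝ) ≤ (C^2)^m := by positivity
      nlinarith
    have hfac : (0:ℝ) < ((k/2).factorial : ℝ) := by positivity
    calc C ^ k / ((1/2 : ℝ) * (k/2).factorial)
        ≤ ((1+C) * (C^2)^(k/2)) / ((1/2 : ℝ) * (k/2).factorial) := by gcongr
      _ = 2 * (1 + C) * ((C^2)^(k/2) / (k/2).factorial) := by
          field_simp
  have hpt : ∀ k : ℕ, Tendsto (fun α : ℝ =>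
      (Complex.exp (-(Complex.I * α * Real.pi / 2)) * ((t ^ α : ℝ) : ℂ) * (x:ℂ)) ^ k
        / (Real.Gamma (α * k + 1) : ℂ)) (nhdsWithin 1 (Set.Iio 1))
      (nhds ((-(Complex.I * t * x)) ^ k / ((k.factorial : ℝ) : ℂ))) := by
    intro k
    have hnum : ContinuousAt (fun α : ℝ =>
        Complex.exp (-(Complex.I * α * Real.pi / 2)) * ((t ^ α : ℝ) : ℂ) * (x:ℂ)) 1 := by
      apply ContinuousAt.mul _ continuousAt_const
      apply ContinuousAt.mul
      · exact Complex.continuous_exp.continuousAt.comp (by fun_prop)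
      · exact Complex.continuous_ofReal.continuousAt.comp
          (Real.continuousAt_const_rpow' one_ne_zero)
    have hne : ∀ m : ℕ, (1:ℝ) * k + 1 ≠ -m := by
      intro m hc
      have h1 : (0:ℝ) ≤ (k:ℝ) := Nat.cast_nonneg k
      have h2 : (0:ℝ) ≤ (m:ℝ) := Nat.cast_nonneg m
      have : (0:ℝ) < 1 * k + 1 := by linarith
      rw [hc] at this; linarith
    have hden : ContinuousAt (fun α : ℝ => ((Real.Gamma (α * k + 1) : ℝ) : ℂ)) 1 := by
      have hf : ContinuousAt (fun α : ℝ => α * k + 1) 1 := by fun_prop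
      have hg : ContinuousAt Real.Gamma ((1:ℝ) * k + 1) :=
        (Real.differentiableAt_Gamma hne).continuousAt
      exact Complex.continuous_ofReal.continuousAt.comp
        (ContinuousAt.comp (f := fun α : ℝ => α * k + 1) hg hf)
    have hG1 : Real.Gamma ((1:ℝ) * k + 1) = k.factorial := by
      rw [one_mul, Real.Gamma_nat_eq_factorial]
    have hdne : ((Real.Gamma ((1:ℝ) * k + 1) : ℝ) : ℂ) ≠ 0 := by
      rw [hG1]
      exact_mod_cast Nat.cast_ne_zero.2 k.factorial_ne_zero
    have hcont : ContinuousAt (fun α : ℝ =>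
        (Complex.exp (-(Complex.I * α * Real.pi / 2)) * ((t ^ α : ℝ) : ℂ) * (x:ℂ)) ^ k
          / (Real.Gamma (α * k + 1) : ℂ)) 1 := (hnum.pow k).div hden hdne
    have := hcont.tendsto.mono_left (nhdsWithin_le_nhds (s := Set.Iio (1:ℝ)))
    convert this using 2
    have hval : Complex.exp (-(Complex.I * (1:ℝ) * Real.pi / 2)) = -Complex.I := by
      rw [show (Complex.I * ((1:ℝ):ℂ) * Real.pi) = Complex.I * Real.pi by push_cast; ring]
      exact aux_exp_neg_I_pi_div_two
    rw [hval, hG1, Real.rpow_one]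
    ring
  have h_bound : ∀ᶠ (α : ℝ) in nhdsWithin 1 (Set.Iio 1), ∀ k : ℕ,
      ‖(Complex.exp (-(Complex.I * α * Real.pi / 2)) * ((t ^ α : ℝ) : ℂ) * (x:ℂ)) ^ k
        / (Real.Gamma (α * k + 1) : ℂ)‖ ≤ bound k := by
    have hmem : Set.Ioo (1/2 : ℝ) 1 ∈ nhdsWithin 1 (Set.Iio 1) :=
      Ioo_mem_nhdsLT_of_mem (by constructor <;> norm_num)
    filter_upwards [hmem] with α hα k
    have hα1 : (1:ℝ)/2 ≤ α := hα.1.le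
    have hα2 : α ≤ 1 := hα.2.le
    have hGpos : 0 < Real.Gamma (α * k + 1) := by
      apply Real.Gamma_pos_of_pos
      have h1 : (0:ℝ) ≤ α * k := by positivity
      linarith
    have hnle : ‖Complex.exp (-(Complex.I * α * Real.pi / 2)) * ((t ^ α : ℝ) : ℂ) * (x:ℂ)‖
        ≤ C := by
      rw [norm_mul, norm_mul, aux_norm_exp, one_mul, Complex.norm_real, Complex.norm_real,
        Real.norm_of_nonneg (Real.rpow_nonneg ht α), Real.norm_of_nonneg hx]
      apply mul_le_mul_of_nonneg_right _ hx
      rcases le_total t 1 with h | h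
      · exact le_trans (Real.rpow_le_one ht h (by linarith)) (le_max_right t 1)
      · calc t ^ α ≤ t ^ (1:ℝ) := Real.rpow_le_rpow_of_exponent_le h hα2
          _ = t := Real.rpow_one t
          _ ≤ max t 1 := le_max_left t 1
    rw [norm_div, norm_pow]
    rw [Complex.norm_real, Real.norm_of_nonneg hGpos.le]
    have hglb := aux_gamma_lb hα1 hα2 k
    have hhalf : (0:ℝ) < (1/2 : ℝ) * (k/2).factorial := by positivity
    exact div_le_div₀ (pow_nonneg hC0 k) (pow_le_pow_left₀ (norm_nonneg _) hnle k) hhalf hglb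
  have main := tendsto_tsum_of_dominated_convergence hsum hpt h_bound
  have hexp : Complex.exp (-(Complex.I * t * x))
      = ∑' k : ℕ, (-(Complex.I * t * x)) ^ k / ((k.factorial : ℝ) : ℂ) := by
    rw [Complex.exp_eq_exp_ℂ, NormedSpace.exp_eq_tsum_div]
    norm_num
  rw [hexp]
  simpa only [mittagLeffler] using main
end
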